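/- arXiv:1907.01712 — 6 statements merged into one kernel-verified Lean document; each statement's English description precedes it below -/
import Mathlib

section
/- In any BCR diagram Γ, the edges that are not legs form a single directed cycle visiting all the non-univalent vertices: for any two non-univalent vertices v and w of Γ, there exists a directed path from v to w using only edges that are not legs. (This is the paper's claim that any BCR diagram consists of one cycle with some legs attached to it.) -/
open Finset

/-- A finite directed graph with a distinguished set of internal vertices `Vi`
and a distinguished set of internal edges `Ei`. Edges are ordered pairs of
vertices, so there are no multiple edges with the same orientation. -/
structure DiGraph (V : Type*) [DecidableEq V] [Fintype V] where
  E : Finset (V × V)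
  Vi : Finset V
  Ei : Finset (V × V)

namespace DiGraph

variable {V : Type*} [DecidableEq V] [Fintype V] (G : DiGraph V)

/-- The external edges. -/
def Ee : Finset (V × V) := G.E \ G.Ei

/-- The external vertices. -/
def Ve : Finset V := G.Viᶜ

/-- The edges going out of `v`. -/
def outE (v : V) : Finset (V × V) := G.E.filter fun e => e.1 = v

/-- The edges coming into `v`. -/
def inE (v : V) : Finset (V × V) := G.E.filter fun e => e.2 = v

/-- The valence of a vertex. -/
def valence (v : V) : ℕ := (G.outE v).card + (G.inE v).card

def Univalent (v : V) : Prop := G.valence v = 1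

def Bivalent (v : V) : Prop := G.valence v = 2

def Trivalent (v : V) : Prop := G.valence v = 3

/-- A leg is an external edge whose source is a univalent vertex. -/
def IsLeg (e : V × V) : Prop := e ∈ G.Ee ∧ G.Univalent e.1

/-- `v` is external and trivalent, with two incoming external edges and one
outgoing external edge, and one of the incoming edges comes from a univalent
vertex. -/
def Cond1 (v : V) : Prop :=
  v ∉ G.Vi ∧
  (∃ e, G.outE v = {e} ∧ e ∈ G.Ee) ∧
  (∃ e f, e ≠ f ∧ G.inE v = {e, f} ∧ e ∈ G.Ee ∧ f ∈ G.Ee) ∧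
  (∃ e ∈ G.inE v, G.Univalent e.1)

/-- `v` is internal and trivalent, with one incoming internal edge, one
outgoing internal edge, and one incoming external edge coming from a
univalent vertex. -/
def Cond2 (v : V) : Prop :=
  v ∈ G.Vi ∧
  (∃ e, G.outE v = {e} ∧ e ∈ G.Ei) ∧
  (∃ e f, e ≠ f ∧ G.inE v = {e, f} ∧ e ∈ G.Ei ∧ f ∈ G.Ee ∧ G.Univalent f.1)

/-- `v` is internal and univalent, with one outgoing external edge. -/
def Cond3 (v : V) : Prop :=
  v ∈ G.Vi ∧ (∃ e, G.outE v = {e} ∧ e ∈ G.Ee) ∧ G.inE v = ∅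

/-- `v` is internal and bivalent, with one incoming external edge and one
outgoing internal edge. -/
def Cond4 (v : V) : Prop :=
  v ∈ G.Vi ∧ (∃ e, G.outE v = {e} ∧ e ∈ G.Ei) ∧ (∃ f, G.inE v = {f} ∧ f ∈ G.Ee)

/-- `v` is internal and bivalent, with one incoming internal edge and one
outgoing external edge. -/
def Cond5 (v : V) : Prop :=
  v ∈ G.Vi ∧ (∃ e, G.outE v = {e} ∧ e ∈ G.Ee) ∧ (∃ f, G.inE v = {f} ∧ f ∈ G.Ei)

/-- The (undirected) adjacency relation of the underlying graph. -/
def Adj (a b : V) : Prop := (a, b) ∈ G.E ∨ (b, a) ∈ G.E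

/-- `G` is a BCR diagram: edges join distinct vertices, internal edges are
edges, the underlying graph is connected, and every vertex satisfies one of
the five conditions. -/
def IsBCR : Prop :=
  (∀ e ∈ G.E, e.1 ≠ e.2) ∧
  G.Ei ⊆ G.E ∧
  (∀ v w : V, Relation.ReflTransGen G.Adj v w) ∧
  (∀ v : V, G.Cond1 v ∨ G.Cond2 v ∨ G.Cond3 v ∨ G.Cond4 v ∨ G.Cond5 v)

end DiGraph


namespace DiGraph

variable {V : Type*} [DecidableEq V] [Fintype V] (G : DiGraph V)

open Classical in
/-- The target of the unique outgoing edge of `v`. -/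
noncomputable def nxt (v : V) : V :=
  if h : ∃ t, G.outE v = {(v, t)} then h.choose else v

variable {G}

lemma out_eq (hG : G.IsBCR) (v : V) : G.outE v = {(v, G.nxt v)} := by
  have hex : ∃ t : V, G.outE v = {(v, t)} := by
    obtain ⟨e, he, _⟩ :
        ∃ e, G.outE v = {e} ∧ (e ∈ G.Ee ∨ e ∈ G.Ei) := by
      rcases hG.2.2.2 v with h | h | h | h | h
      · exact ⟨h.2.1.choose, h.2.1.choose_spec.1, Or.inl h.2.1.choose_spec.2⟩
      · exact ⟨h.2.1.choose, h.2.1.choose_spec.1, Or.inr h.2.1.choose_spec.2⟩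
      · exact ⟨h.2.1.choose, h.2.1.choose_spec.1, Or.inl h.2.1.choose_spec.2⟩
      · exact ⟨h.2.1.choose, h.2.1.choose_spec.1, Or.inr h.2.1.choose_spec.2⟩
      · exact ⟨h.2.1.choose, h.2.1.choose_spec.1, Or.inl h.2.1.choose_spec.2⟩
    have hmem : e ∈ G.outE v := by rw [he]; exact Finset.mem_singleton_self e
    have h1 : e.1 = v := (Finset.mem_filter.mp hmem).2
    exact ⟨e.2, by rw [he]; congr 1; exact Prod.ext_iff.mpr ⟨h1, rfl⟩⟩
  rw [nxt, dif_pos hex]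
  exact hex.choose_spec

lemma nxt_mem (hG : G.IsBCR) (v : V) : (v, G.nxt v) ∈ G.E := by
  have : (v, G.nxt v) ∈ G.outE v := by
    rw [out_eq hG v]; exact Finset.mem_singleton_self _
  exact (Finset.mem_filter.mp this).1

lemma eq_nxt (hG : G.IsBCR) {a b : V} (h : (a, b) ∈ G.E) : b = G.nxt a := by
  have : (a, b) ∈ G.outE a := Finset.mem_filter.mpr ⟨h, rfl⟩
  rw [out_eq hG a, Finset.mem_singleton] at this
  exact (Prod.mk.injEq _ _ _ _ ▸ this).2

lemma univalent_iff (hG : G.IsBCR) (v : V) :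
    G.Univalent v ↔ G.inE v = ∅ := by
  have h1 : (G.outE v).card = 1 := by rw [out_eq hG v]; simp
  unfold Univalent valence
  rw [h1]
  constructor
  · intro h
    have : (G.inE v).card = 0 := by omega
    exact Finset.card_eq_zero.mp this
  · intro h; rw [h]; simp

lemma not_univalent_of_in (hG : G.IsBCR) {a b : V} (h : (a, b) ∈ G.E) :
    ¬ G.Univalent b := by
  intro hu
  have : (a, b) ∈ G.inE b := Finset.mem_filter.mpr ⟨h, rfl⟩
  rw [(univalent_iff hG b).mp hu] at this
  exact absurd this (Finset.notMem_empty _)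

lemma leg_of_univalent (hG : G.IsBCR) {a b : V} (hu : G.Univalent a)
    (h : (a, b) ∈ G.E) : G.IsLeg (a, b) := by
  have hin : G.inE a = ∅ := (univalent_iff hG a).mp hu
  rcases hG.2.2.2 a with hc | hc | hc | hc | hc
  · obtain ⟨-, -, ⟨e, f, -, he, -⟩, -⟩ := hc
    exfalso
    have : f ∈ G.inE a := he ▸ Finset.mem_insert_of_mem (Finset.mem_singleton_self f)
    rw [hin] at this; exact Finset.notMem_empty _ this
  · obtain ⟨-, -, ⟨e, f, -, he, -⟩⟩ := hc
    exfalso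
    have : f ∈ G.inE a := he ▸ Finset.mem_insert_of_mem (Finset.mem_singleton_self f)
    rw [hin] at this; exact Finset.notMem_empty _ this
  · obtain ⟨-, ⟨e, he, hee⟩, -⟩ := hc
    have : (a, b) ∈ G.outE a := Finset.mem_filter.mpr ⟨h, rfl⟩
    rw [he, Finset.mem_singleton] at this
    exact ⟨this ▸ hee, hu⟩
  · obtain ⟨-, -, f, hf, -⟩ := hc
    exfalso
    have : f ∈ G.inE a := hf ▸ Finset.mem_singleton_self f
    rw [hin] at this; exact Finset.notMem_empty _ this
  · obtain ⟨-, -, f, hf, -⟩ := hc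
    exfalso
    have : f ∈ G.inE a := hf ▸ Finset.mem_singleton_self f
    rw [hin] at this; exact Finset.notMem_empty _ this

lemma in_unique (hG : G.IsBCR) {w a b : V}
    (ha : (a, w) ∈ G.E) (hb : (b, w) ∈ G.E)
    (hla : ¬ G.IsLeg (a, w)) (hlb : ¬ G.IsLeg (b, w)) : a = b := by
  have hma : (a, w) ∈ G.inE w := Finset.mem_filter.mpr ⟨ha, rfl⟩
  have hmb : (b, w) ∈ G.inE w := Finset.mem_filter.mpr ⟨hb, rfl⟩
  rcases hG.2.2.2 w with hc | hc | hc | hc | hc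
  · obtain ⟨-, -, ⟨e, f, hef, hin, he, hf⟩, ⟨g, hg, hgu⟩⟩ := hc
    have hgleg : G.IsLeg g := by
      refine ⟨?_, hgu⟩
      rw [hin] at hg
      rcases Finset.mem_insert.mp hg with h | h
      · exact h ▸ he
      · exact (Finset.mem_singleton.mp h) ▸ hf
    have hag : (a, w) ≠ g := fun h => hla (h ▸ hgleg)
    have hbg : (b, w) ≠ g := fun h => hlb (h ▸ hgleg)
    rw [hin, Finset.mem_insert, Finset.mem_singleton] at hma hmb
    rw [hin] at hg
    rcases Finset.mem_insert.mp hg with h | h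
    · -- g = e
      have ha' : (a, w) = f := by
        rcases hma with h2 | h2
        · exact absurd (h2.trans h.symm) hag
        · exact h2
      have hb' : (b, w) = f := by
        rcases hmb with h2 | h2
        · exact absurd (h2.trans h.symm) hbg
        · exact h2
      have := ha'.trans hb'.symm
      exact (Prod.mk.injEq _ _ _ _ ▸ this).1
    · -- g = f
      have h' := Finset.mem_singleton.mp h
      have ha' : (a, w) = e := by
        rcases hma with h2 | h2
        · exact h2
        · exact absurd (h2.trans h'.symm) hag
      have hb' : (b, w) = e := by
        rcases hmb with h2 | h2
        · exact h2
        · exact absurd (h2.trans h'.symm) hbg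
      have := ha'.trans hb'.symm
      exact (Prod.mk.injEq _ _ _ _ ▸ this).1
  · obtain ⟨-, -, ⟨e, f, hef, hin, he, hfe, hfu⟩⟩ := hc
    have hfleg : G.IsLeg f := ⟨hfe, hfu⟩
    rw [hin, Finset.mem_insert, Finset.mem_singleton] at hma hmb
    have ha' : (a, w) = e := by
      rcases hma with h2 | h2
      · exact h2
      · exact absurd (h2 ▸ hfleg) hla
    have hb' : (b, w) = e := by
      rcases hmb with h2 | h2
      · exact h2
      · exact absurd (h2 ▸ hfleg) hlb
    have := ha'.trans hb'.symm
    exact (Prod.mk.injEq _ _ _ _ ▸ this).1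
  · obtain ⟨-, -, hin⟩ := hc
    rw [hin] at hma
    exact absurd hma (Finset.notMem_empty _)
  · obtain ⟨-, -, f, hin, -⟩ := hc
    rw [hin, Finset.mem_singleton] at hma hmb
    have := hma.trans hmb.symm
    exact (Prod.mk.injEq _ _ _ _ ▸ this).1
  · obtain ⟨-, -, f, hin, -⟩ := hc
    rw [hin, Finset.mem_singleton] at hma hmb
    have := hma.trans hmb.symm
    exact (Prod.mk.injEq _ _ _ _ ▸ this).1

/-- The step relation: non-leg edges. -/
def Step (G : DiGraph V) (a b : V) : Prop := (a, b) ∈ G.E ∧ ¬ G.IsLeg (a, b)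

lemma step_src_not_univalent (hG : G.IsBCR) {a b : V} (h : G.Step a b) :
    ¬ G.Univalent a := fun hu => h.2 (leg_of_univalent hG hu h.1)

lemma step_nxt (hG : G.IsBCR) {a : V} (ha : ¬ G.Univalent a) :
    G.Step a (G.nxt a) :=
  ⟨nxt_mem hG a, fun hleg => ha hleg.2⟩

lemma back (hG : G.IsBCR) {a : V} (ha : ¬ G.Univalent a) :
    Relation.ReflTransGen G.Step (G.nxt a) a := by
  set A : Set V := {x | Relation.ReflTransGen G.Step (G.nxt a) x} with hA
  have hAnu : ∀ x ∈ A, ¬ G.Univalent x := by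
    intro x hx
    induction hx with
    | refl => exact not_univalent_of_in hG (nxt_mem hG a)
    | tail _ hstep _ => exact not_univalent_of_in hG hstep.1
  have hmaps : Set.MapsTo G.nxt A A := fun x hx =>
    Relation.ReflTransGen.tail hx (step_nxt hG (hAnu x hx))
  have hinj : Set.InjOn G.nxt A := by
    intro x hx y hy hxy
    have hsx := step_nxt hG (hAnu x hx)
    have hsy := step_nxt hG (hAnu y hy)
    exact in_unique hG hsx.1 (hxy ▸ hsy.1) hsx.2 (hxy ▸ hsy.2)
  have hbij : Set.BijOn G.nxt A A :=
    ((Set.toFinite A).injOn_iff_bijOn_of_mapsTo hmaps).mp hinj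
  have hmem : G.nxt a ∈ A := Relation.ReflTransGen.refl
  obtain ⟨x, hx, hxa⟩ := hbij.surjOn hmem
  have hsx := step_nxt hG (hAnu x hx)
  have hsa := step_nxt hG ha
  have hxeq : x = a := in_unique hG hsx.1 (hxa ▸ hsa.1) hsx.2 (hxa ▸ hsa.2)
  subst hxeq
  exact hx

lemma step_symm (hG : G.IsBCR) {a b : V}
    (h : Relation.ReflTransGen G.Step a b) :
    Relation.ReflTransGen G.Step b a := by
  induction h with
  | refl => exact Relation.ReflTransGen.refl
  | tail _ hstep ih =>
    rename_i c b' _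
    have hc : ¬ G.Univalent c := step_src_not_univalent hG hstep
    have hb : b' = G.nxt c := eq_nxt hG hstep.1
    exact (hb ▸ back hG hc).trans ih

open Classical in
noncomputable def proj (G : DiGraph V) (v : V) : V :=
  if G.Univalent v then G.nxt v else v

lemma proj_not_univalent (hG : G.IsBCR) (v : V) : ¬ G.Univalent (G.proj v) := by
  unfold proj
  split
  · exact not_univalent_of_in hG (nxt_mem hG v)
  · assumption

lemma proj_eq_of_not_univalent {v : V} (hv : ¬ G.Univalent v) : G.proj v = v :=
  if_neg hv

lemma step_of_edge (hG : G.IsBCR) {a b : V} (h : (a, b) ∈ G.E) :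
    Relation.ReflTransGen G.Step (G.proj a) (G.proj b) := by
  have hb : ¬ G.Univalent b := not_univalent_of_in hG h
  rw [proj_eq_of_not_univalent hb]
  unfold proj
  split
  · rename_i hu
    rw [← eq_nxt hG h]
  · rename_i hu
    exact Relation.ReflTransGen.single ⟨h, fun hleg => hu hleg.2⟩

lemma adj_step (hG : G.IsBCR) {a b : V} (h : G.Adj a b) :
    Relation.ReflTransGen G.Step (G.proj a) (G.proj b) := by
  rcases h with h | h
  · exact step_of_edge hG h
  · exact step_symm hG (step_of_edge hG h)

end DiGraph

/-- In any BCR diagram, the edges that are not legs form a single directed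
cycle visiting all the non-univalent vertices: for any two non-univalent
vertices `v` and `w`, there is a directed path from `v` to `w` using only
edges that are not legs. -/
theorem bcr_cycle_connects_nonunivalent {V : Type*} [DecidableEq V] [Fintype V]
    (G : DiGraph V) (hG : G.IsBCR) :
    ∀ v w : V, ¬ G.Univalent v → ¬ G.Univalent w →
      Relation.ReflTransGen (fun a b : V => (a, b) ∈ G.E ∧ ¬ G.IsLeg (a, b)) v w := by
  have key : ∀ x y : V, Relation.ReflTransGen G.Adj x y →
      Relation.ReflTransGen G.Step (G.proj x) (G.proj y) := by
    intro x y h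
    induction h with
    | refl => exact Relation.ReflTransGen.refl
    | tail _ hadj ih => exact ih.trans (DiGraph.adj_step hG hadj)
  intro v w hv hw
  have h := key v w (hG.2.2.1 v w)
  rwa [G.proj_eq_of_not_univalent hv, G.proj_eq_of_not_univalent hw] at h
end

section
/- Every BCR diagram has an even number of vertices; equivalently, the degree of a BCR diagram (half the number of its vertices) is an integer. -/
open Finset

/-!
Every vertex of a BCR diagram has exactly one outgoing edge, so there are as many edges as
vertices. Inspecting the five vertex types, the number of external edges entering a vertex
plus the number of internal edges leaving it is always even (`2 + 0`, `1 + 1`, `0 + 0`,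
`1 + 1`, `0 + 0`). Summing over all vertices counts every external edge once (at its target)
and every internal edge once (at its source), so the number of edges is even.
-/

namespace DiGraph

variable {V : Type*} [DecidableEq V] [Fintype V] {G : DiGraph V}

lemma card_outE_of_cond {v : V}
    (h : G.Cond1 v ∨ G.Cond2 v ∨ G.Cond3 v ∨ G.Cond4 v ∨ G.Cond5 v) :
    (G.outE v).card = 1 := by
  rcases h with h | h | h | h | h <;>
    obtain ⟨e, he, -⟩ := h.2.1 <;> rw [he, card_singleton]

lemma card_E_eq_card_of_card_outE (h : ∀ v, (G.outE v).card = 1) :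
    G.E.card = Fintype.card V := by
  rw [card_eq_sum_card_fiberwise (f := Prod.fst) (t := univ) fun _ _ => mem_univ _]
  simpa [outE] using sum_congr rfl fun v (_ : v ∈ univ) => h v

lemma filter_Ee_snd_eq (v : V) :
    G.Ee.filter (·.2 = v) = (G.inE v).filter (· ∉ G.Ei) := by
  ext e
  simp only [Ee, inE, mem_filter, mem_sdiff]
  tauto

lemma filter_Ei_fst_eq (hEi : G.Ei ⊆ G.E) (v : V) :
    G.Ei.filter (·.1 = v) = (G.outE v).filter (· ∈ G.Ei) := by
  ext e
  simp only [outE, mem_filter]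
  exact ⟨fun ⟨he, hv⟩ => ⟨⟨hEi he, hv⟩, he⟩, fun ⟨⟨_, hv⟩, he⟩ => ⟨he, hv⟩⟩

lemma even_card_extIn_add_card_intOut (hEi : G.Ei ⊆ G.E) {v : V}
    (h : G.Cond1 v ∨ G.Cond2 v ∨ G.Cond3 v ∨ G.Cond4 v ∨ G.Cond5 v) :
    Even ((G.Ee.filter (·.2 = v)).card + (G.Ei.filter (·.1 = v)).card) := by
  have notMem_Ei {e} (he : e ∈ G.Ee) : e ∉ G.Ei := (mem_sdiff.mp he).2
  rw [filter_Ee_snd_eq, filter_Ei_fst_eq hEi]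
  rcases h with
    ⟨-, ⟨e, hout, he⟩, ⟨a, b, hab, hin, ha, hb⟩, -⟩ |
    ⟨-, ⟨e, hout, he⟩, ⟨a, b, hab, hin, ha, hb, -⟩⟩ | ⟨-, ⟨e, hout, he⟩, hin⟩ |
    ⟨-, ⟨e, hout, he⟩, ⟨f, hin, hf⟩⟩ | ⟨-, ⟨e, hout, he⟩, ⟨f, hin, hf⟩⟩
  · simp [hout, hin, filter_singleton, filter_insert, notMem_Ei ha, notMem_Ei hb, notMem_Ei he,
      hab]
  · simp [hout, hin, filter_singleton, filter_insert, ha, notMem_Ei hb, he]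
  · simp [hout, hin, filter_singleton, notMem_Ei he]
  · simp [hout, hin, filter_singleton, notMem_Ei hf, he]
  · simp [hout, hin, filter_singleton, hf, notMem_Ei he]

end DiGraph

open DiGraph in
/-- Every BCR diagram has an even number of vertices. -/
theorem bcr_even_vertices {V : Type*} [DecidableEq V] [Fintype V]
    (G : DiGraph V) (hG : G.IsBCR) :
    Even (Fintype.card V) := by
  obtain ⟨-, hEi, -, hcond⟩ := hG
  have hsum : Even (G.Ee.card + G.Ei.card) := by
    rw [card_eq_sum_card_fiberwise (f := Prod.snd) (t := univ) fun _ _ => mem_univ _,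
      card_eq_sum_card_fiberwise (f := Prod.fst) (t := univ) fun _ _ => mem_univ _,
      ← sum_add_distrib]
    exact even_sum _ fun v _ => even_card_extIn_add_card_intOut hEi (hcond v)
  rwa [Ee, card_sdiff_add_card_eq_card hEi,
    card_E_eq_card_of_card_outE fun v => card_outE_of_cond (hcond v)] at hsum
end

section
/- Let n ≥ 3 be an odd integer. For every BCR diagram Γ, the following equality of natural numbers holds: (n−1)·|E_i(Γ)| + (n+1)·|E_e(Γ)| = n·|V_i(Γ)| + (n+2)·|V_e(Γ)|. (This is the combinatorial content of the paper's Lemma asserting that the dimension of the compact configuration space C_Γ(ψ) equals the degree of the form ω^F(Γ,σ,ψ), where the dimension is n per internal vertex and n+2 per external vertex, and the form has degree n−1 per internal edge and n+1 per external edge.) -/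
open Finset

/-- For odd `n ≥ 3` and any BCR diagram `Γ`,
`(n-1)·|E_i(Γ)| + (n+1)·|E_e(Γ)| = n·|V_i(Γ)| + (n+2)·|V_e(Γ)|`. -/
theorem bcr_dimension_eq_degree {V : Type*} [DecidableEq V] [Fintype V]
    (G : DiGraph V) (hG : G.IsBCR) (n : ℕ) (hn : 3 ≤ n) (hodd : Odd n) :
    (n - 1) * G.Ei.card + (n + 1) * G.Ee.card
      = n * G.Vi.card + (n + 2) * G.Ve.card := by
  classical
  obtain ⟨hne, hsub, hconn, hcond⟩ := hG
  have hEe : G.Ee ⊆ G.E := Finset.sdiff_subset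
  have hsrc : ∀ s : Finset (V × V), ∑ v : V, (s.filter fun e => e.1 = v).card = s.card :=
    fun s => (Finset.card_eq_sum_card_fiberwise (fun e _ => Finset.mem_univ e.1)).symm
  have htgt : ∀ s : Finset (V × V), ∑ v : V, (s.filter fun e => e.2 = v).card = s.card :=
    fun s => (Finset.card_eq_sum_card_fiberwise (fun e _ => Finset.mem_univ e.2)).symm
  have hIout : ∀ v, (G.Ei.filter fun e => e.1 = v) = (G.outE v).filter (fun e => e ∈ G.Ei) := by
    intro v; ext e
    simp only [Finset.mem_filter, DiGraph.outE]
    exact ⟨fun ⟨h1, h2⟩ => ⟨⟨hsub h1, h2⟩, h1⟩, fun ⟨⟨_, h2⟩, h1⟩ => ⟨h1, h2⟩⟩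
  have hEout : ∀ v, (G.Ee.filter fun e => e.1 = v) = (G.outE v).filter (fun e => e ∈ G.Ee) := by
    intro v; ext e
    simp only [Finset.mem_filter, DiGraph.outE]
    exact ⟨fun ⟨h1, h2⟩ => ⟨⟨hEe h1, h2⟩, h1⟩, fun ⟨⟨_, h2⟩, h1⟩ => ⟨h1, h2⟩⟩
  have hEin : ∀ v, (G.Ee.filter fun e => e.2 = v) = (G.inE v).filter (fun e => e ∈ G.Ee) := by
    intro v; ext e
    simp only [Finset.mem_filter, DiGraph.inE]
    exact ⟨fun ⟨h1, h2⟩ => ⟨⟨hEe h1, h2⟩, h1⟩, fun ⟨⟨_, h2⟩, h1⟩ => ⟨h1, h2⟩⟩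
  have hIE : ∀ e ∈ G.Ei, e ∉ G.Ee := by
    intro e he hee
    exact (Finset.mem_sdiff.mp hee).2 he
  have hEI : ∀ e ∈ G.Ee, e ∉ G.Ei := fun e he => (Finset.mem_sdiff.mp he).2
  have key : ∀ v : V,
      (n - 1) * (G.Ei.filter fun e => e.1 = v).card
        + n * (G.Ee.filter fun e => e.1 = v).card
        + (G.Ee.filter fun e => e.2 = v).card
      = if v ∈ G.Vi then n else n + 2 := by
    intro v
    rcases hcond v with h | h | h | h | h
    · -- Cond1 : external, out {e} ∈ Ee, in {e,f} ⊆ Ee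
      obtain ⟨hvi, ⟨e, hout, heE⟩, ⟨a, b, hab, hin, haE, hbE⟩, -⟩ := h
      rw [if_neg hvi, hIout, hEout, hEin, hout, hin]
      rw [Finset.filter_singleton, if_neg (hEI e heE), Finset.filter_singleton, if_pos heE]
      have : Finset.filter (fun e => e ∈ G.Ee) {a, b} = {a, b} := by
        apply Finset.filter_true_of_mem
        intro x hx
        rcases Finset.mem_insert.mp hx with h | h
        · subst h; exact haE
        · rw [Finset.mem_singleton.mp h]; exact hbE
      rw [this, Finset.card_singleton, Finset.card_empty,
        Finset.card_insert_of_notMem (by simpa using hab), Finset.card_singleton]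
      omega
    · -- Cond2 : internal, out {e} ∈ Ei, in {a,b}, a ∈ Ei, b ∈ Ee
      obtain ⟨hvi, ⟨e, hout, heI⟩, ⟨a, b, hab, hin, haI, hbE, -⟩⟩ := h
      rw [if_pos hvi, hIout, hEout, hEin, hout, hin]
      rw [Finset.filter_singleton, if_pos heI, Finset.filter_singleton, if_neg (hIE e heI)]
      have : Finset.filter (fun e => e ∈ G.Ee) {a, b} = {b} := by
        rw [show ({a, b} : Finset (V × V)) = insert a {b} from rfl,
          Finset.filter_insert, if_neg (hIE a haI), Finset.filter_singleton, if_pos hbE]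
      rw [this, Finset.card_singleton, Finset.card_empty, Finset.card_singleton]
      omega
    · -- Cond3 : internal, out {e} ∈ Ee, in ∅
      obtain ⟨hvi, ⟨e, hout, heE⟩, hin⟩ := h
      rw [if_pos hvi, hIout, hEout, hEin, hout, hin]
      rw [Finset.filter_singleton, if_neg (hEI e heE), Finset.filter_singleton, if_pos heE]
      simp only [Finset.filter_empty, Finset.card_empty, Finset.card_singleton]
      omega
    · -- Cond4 : internal, out {e} ∈ Ei, in {f} ∈ Ee
      obtain ⟨hvi, ⟨e, hout, heI⟩, ⟨f, hin, hfE⟩⟩ := h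
      rw [if_pos hvi, hIout, hEout, hEin, hout, hin]
      rw [Finset.filter_singleton, if_pos heI, Finset.filter_singleton, if_neg (hIE e heI),
        Finset.filter_singleton, if_pos hfE]
      simp only [Finset.card_empty, Finset.card_singleton]
      omega
    · -- Cond5 : internal, out {e} ∈ Ee, in {f} ∈ Ei
      obtain ⟨hvi, ⟨e, hout, heE⟩, ⟨f, hin, hfI⟩⟩ := h
      rw [if_pos hvi, hIout, hEout, hEin, hout, hin]
      rw [Finset.filter_singleton, if_neg (hEI e heE), Finset.filter_singleton, if_pos heE,
        Finset.filter_singleton, if_neg (hIE f hfI)]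
      simp only [Finset.card_empty, Finset.card_singleton]
      omega
  have hsum : ∑ v : V, ((n - 1) * (G.Ei.filter fun e => e.1 = v).card
        + n * (G.Ee.filter fun e => e.1 = v).card
        + (G.Ee.filter fun e => e.2 = v).card)
      = ∑ v : V, (if v ∈ G.Vi then n else n + 2) := by
    exact Finset.sum_congr rfl fun v _ => key v
  rw [Finset.sum_add_distrib, Finset.sum_add_distrib, ← Finset.mul_sum, ← Finset.mul_sum,
    hsrc, hsrc, htgt] at hsum
  have hrhs : ∑ v : V, (if v ∈ G.Vi then n else n + 2)
      = n * G.Vi.card + (n + 2) * G.Ve.card := by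
    rw [← Finset.sum_add_sum_compl G.Vi]
    congr 1
    · rw [Finset.sum_congr rfl (fun v hv => if_pos hv), Finset.sum_const, smul_eq_mul, mul_comm]
    · rw [Finset.sum_congr rfl (fun v hv => if_neg (Finset.mem_compl.mp hv)),
        Finset.sum_const, smul_eq_mul, mul_comm]
      rfl
  rw [hrhs] at hsum
  have h1 : 3 ≤ n := hn
  nlinarith [hsum]
end

section
/- Let n ≥ 3 be an odd integer and let Γ be a BCR diagram. For every nonempty proper subset S' ⊊ V(Γ), the following strict inequality holds: n·|S' ∩ V_i(Γ)| + (n+2)·|S' ∩ V_e(Γ)| < (n−1)·|E_i(S')| + (n+1)·|E_e(S')|, where E_i(S') (respectively E_e(S')) denotes the set of internal (respectively external) edges of Γ having at least one endpoint in S'. -/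
open Finset

namespace DiGraph

variable {V : Type*} [DecidableEq V] [Fintype V] (G : DiGraph V)

/-- A choice of target of an outgoing edge at `v` (junk value if none). -/
noncomputable def tgt (v : V) : V :=
  if h : ∃ w, (v, w) ∈ G.E then h.choose else v

lemma tgt_spec {v : V} (h : ∃ w, (v, w) ∈ G.E) : (v, G.tgt v) ∈ G.E := by
  rw [tgt, dif_pos h]; exact h.choose_spec

open Classical in
/-- A choice of a univalent in-neighbour of `w` (junk value if none). -/
noncomputable def leafOf (w : V) : V :=
  if h : ∃ v, (v, w) ∈ G.E ∧ G.Univalent v then h.choose else w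

open Classical in
lemma leafOf_spec {w : V} (h : ∃ v, (v, w) ∈ G.E ∧ G.Univalent v) :
    (G.leafOf w, w) ∈ G.E ∧ G.Univalent (G.leafOf w) := by
  rw [leafOf, dif_pos h]; exact h.choose_spec

lemma Ee_subset : G.Ee ⊆ G.E := Finset.sdiff_subset

lemma not_mem_Ei {e : V × V} (h : e ∈ G.Ee) : e ∉ G.Ei := (Finset.mem_sdiff.1 h).2

lemma mem_E_of_Ee {e : V × V} (h : e ∈ G.Ee) : e ∈ G.E := (Finset.mem_sdiff.1 h).1

lemma filter_fst_eq (T : Finset (V × V)) (hT : T ⊆ G.E) (v : V) :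
    T.filter (fun e => e.1 = v) = T ∩ G.outE v := by
  ext e
  simp only [Finset.mem_filter, Finset.mem_inter, outE]
  exact ⟨fun h => ⟨h.1, hT h.1, h.2⟩, fun h => ⟨h.1, h.2.2⟩⟩

lemma filter_snd_eq (T : Finset (V × V)) (hT : T ⊆ G.E) (v : V) :
    T.filter (fun e => e.2 = v) = T ∩ G.inE v := by
  ext e
  simp only [Finset.mem_filter, Finset.mem_inter, inE]
  exact ⟨fun h => ⟨h.1, hT h.1, h.2⟩, fun h => ⟨h.1, h.2.2⟩⟩

section degs

/-- out-degrees and in-degrees of a `Cond1` vertex. -/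
lemma degs1 (hEi : G.Ei ⊆ G.E) {v : V} (h : G.Cond1 v) :
    (G.Ei.filter fun e => e.1 = v).card = 0 ∧ (G.Ee.filter fun e => e.1 = v).card = 1 ∧
    (G.Ei.filter fun e => e.2 = v).card = 0 ∧ (G.Ee.filter fun e => e.2 = v).card = 2 := by
  obtain ⟨-, ⟨e, hout, he⟩, ⟨e', f, hef, hin, he', hf⟩, -⟩ := h
  rw [G.filter_fst_eq _ hEi, G.filter_fst_eq _ (G.Ee_subset),
      G.filter_snd_eq _ hEi, G.filter_snd_eq _ (G.Ee_subset), hout, hin]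
  refine ⟨?_, ?_, ?_, ?_⟩
  · rw [Finset.card_eq_zero]
    ext x; simp only [Finset.mem_inter, Finset.mem_singleton, Finset.notMem_empty, iff_false]
    rintro ⟨hx, rfl⟩; exact G.not_mem_Ei he hx
  · have : G.Ee ∩ {e} = {e} := Finset.inter_eq_right.2 (by simp [he])
    rw [this, Finset.card_singleton]
  · rw [Finset.card_eq_zero]
    ext x; simp only [Finset.mem_inter, Finset.mem_insert, Finset.mem_singleton,
      Finset.notMem_empty, iff_false]
    rintro ⟨hx, rfl | rfl⟩
    · exact G.not_mem_Ei he' hx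
    · exact G.not_mem_Ei hf hx
  · have : G.Ee ∩ {e', f} = {e', f} := Finset.inter_eq_right.2 (by
      intro x hx; simp only [Finset.mem_insert, Finset.mem_singleton] at hx
      rcases hx with rfl | rfl <;> assumption)
    rw [this, Finset.card_pair hef]

lemma degs2 (hEi : G.Ei ⊆ G.E) {v : V} (h : G.Cond2 v) :
    (G.Ei.filter fun e => e.1 = v).card = 1 ∧ (G.Ee.filter fun e => e.1 = v).card = 0 ∧
    (G.Ei.filter fun e => e.2 = v).card = 1 ∧ (G.Ee.filter fun e => e.2 = v).card = 1 := by
  obtain ⟨-, ⟨e, hout, he⟩, ⟨e', f, hef, hin, he', hf, -⟩⟩ := h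
  rw [G.filter_fst_eq _ hEi, G.filter_fst_eq _ (G.Ee_subset),
      G.filter_snd_eq _ hEi, G.filter_snd_eq _ (G.Ee_subset), hout, hin]
  refine ⟨?_, ?_, ?_, ?_⟩
  · have : G.Ei ∩ {e} = {e} := Finset.inter_eq_right.2 (by simp [he])
    rw [this, Finset.card_singleton]
  · rw [Finset.card_eq_zero]
    ext x; simp only [Finset.mem_inter, Finset.mem_singleton, Finset.notMem_empty, iff_false]
    rintro ⟨hx, rfl⟩; exact G.not_mem_Ei hx he
  · have : G.Ei ∩ {e', f} = {e'} := by
      ext x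
      simp only [Finset.mem_inter, Finset.mem_insert, Finset.mem_singleton]
      constructor
      · rintro ⟨hx, rfl | rfl⟩
        · rfl
        · exact absurd hx (G.not_mem_Ei hf)
      · rintro rfl; exact ⟨he', Or.inl rfl⟩
    rw [this, Finset.card_singleton]
  · have : G.Ee ∩ {e', f} = {f} := by
      ext x
      simp only [Finset.mem_inter, Finset.mem_insert, Finset.mem_singleton]
      constructor
      · rintro ⟨hx, rfl | rfl⟩
        · exact absurd he' (G.not_mem_Ei hx)
        · rfl
      · rintro rfl; exact ⟨hf, Or.inr rfl⟩
    rw [this, Finset.card_singleton]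

lemma degs3 (hEi : G.Ei ⊆ G.E) {v : V} (h : G.Cond3 v) :
    (G.Ei.filter fun e => e.1 = v).card = 0 ∧ (G.Ee.filter fun e => e.1 = v).card = 1 ∧
    (G.Ei.filter fun e => e.2 = v).card = 0 ∧ (G.Ee.filter fun e => e.2 = v).card = 0 := by
  obtain ⟨-, ⟨e, hout, he⟩, hin⟩ := h
  rw [G.filter_fst_eq _ hEi, G.filter_fst_eq _ (G.Ee_subset),
      G.filter_snd_eq _ hEi, G.filter_snd_eq _ (G.Ee_subset), hout, hin,
      Finset.inter_empty, Finset.inter_empty]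
  refine ⟨?_, ?_, rfl, rfl⟩
  · rw [Finset.card_eq_zero]
    ext x; simp only [Finset.mem_inter, Finset.mem_singleton, Finset.notMem_empty, iff_false]
    rintro ⟨hx, rfl⟩; exact G.not_mem_Ei he hx
  · have : G.Ee ∩ {e} = {e} := Finset.inter_eq_right.2 (by simp [he])
    rw [this, Finset.card_singleton]

lemma degs4 (hEi : G.Ei ⊆ G.E) {v : V} (h : G.Cond4 v) :
    (G.Ei.filter fun e => e.1 = v).card = 1 ∧ (G.Ee.filter fun e => e.1 = v).card = 0 ∧
    (G.Ei.filter fun e => e.2 = v).card = 0 ∧ (G.Ee.filter fun e => e.2 = v).card = 1 := by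
  obtain ⟨-, ⟨e, hout, he⟩, ⟨f, hin, hf⟩⟩ := h
  rw [G.filter_fst_eq _ hEi, G.filter_fst_eq _ (G.Ee_subset),
      G.filter_snd_eq _ hEi, G.filter_snd_eq _ (G.Ee_subset), hout, hin]
  refine ⟨?_, ?_, ?_, ?_⟩
  · have : G.Ei ∩ {e} = {e} := Finset.inter_eq_right.2 (by simp [he])
    rw [this, Finset.card_singleton]
  · rw [Finset.card_eq_zero]
    ext x; simp only [Finset.mem_inter, Finset.mem_singleton, Finset.notMem_empty, iff_false]
    rintro ⟨hx, rfl⟩; exact G.not_mem_Ei hx he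
  · rw [Finset.card_eq_zero]
    ext x; simp only [Finset.mem_inter, Finset.mem_singleton, Finset.notMem_empty, iff_false]
    rintro ⟨hx, rfl⟩; exact G.not_mem_Ei hf hx
  · have : G.Ee ∩ {f} = {f} := Finset.inter_eq_right.2 (by simp [hf])
    rw [this, Finset.card_singleton]

lemma degs5 (hEi : G.Ei ⊆ G.E) {v : V} (h : G.Cond5 v) :
    (G.Ei.filter fun e => e.1 = v).card = 0 ∧ (G.Ee.filter fun e => e.1 = v).card = 1 ∧
    (G.Ei.filter fun e => e.2 = v).card = 1 ∧ (G.Ee.filter fun e => e.2 = v).card = 0 := by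
  obtain ⟨-, ⟨e, hout, he⟩, ⟨f, hin, hf⟩⟩ := h
  rw [G.filter_fst_eq _ hEi, G.filter_fst_eq _ (G.Ee_subset),
      G.filter_snd_eq _ hEi, G.filter_snd_eq _ (G.Ee_subset), hout, hin]
  refine ⟨?_, ?_, ?_, ?_⟩
  · rw [Finset.card_eq_zero]
    ext x; simp only [Finset.mem_inter, Finset.mem_singleton, Finset.notMem_empty, iff_false]
    rintro ⟨hx, rfl⟩; exact G.not_mem_Ei he hx
  · have : G.Ee ∩ {e} = {e} := Finset.inter_eq_right.2 (by simp [he])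
    rw [this, Finset.card_singleton]
  · have : G.Ei ∩ {f} = {f} := Finset.inter_eq_right.2 (by simp [hf])
    rw [this, Finset.card_singleton]
  · rw [Finset.card_eq_zero]
    ext x; simp only [Finset.mem_inter, Finset.mem_singleton, Finset.notMem_empty, iff_false]
    rintro ⟨hx, rfl⟩; exact G.not_mem_Ei hx hf

end degs

lemma val1 {v : V} (h : G.Cond1 v) : G.valence v = 3 := by
  obtain ⟨-, ⟨e, hout, -⟩, ⟨e', f, hef, hin, -, -⟩, -⟩ := h
  rw [valence, hout, hin, Finset.card_singleton, Finset.card_pair hef]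

lemma val2 {v : V} (h : G.Cond2 v) : G.valence v = 3 := by
  obtain ⟨-, ⟨e, hout, -⟩, ⟨e', f, hef, hin, -, -⟩⟩ := h
  rw [valence, hout, hin, Finset.card_singleton, Finset.card_pair hef]

lemma val3 {v : V} (h : G.Cond3 v) : G.Univalent v := by
  obtain ⟨-, ⟨e, hout, -⟩, hin⟩ := h
  show G.valence v = 1
  rw [valence, hout, hin, Finset.card_singleton, Finset.card_empty]

lemma val4 {v : V} (h : G.Cond4 v) : G.valence v = 2 := by
  obtain ⟨-, ⟨e, hout, -⟩, ⟨f, hin, -⟩⟩ := h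
  rw [valence, hout, hin, Finset.card_singleton, Finset.card_singleton]

lemma val5 {v : V} (h : G.Cond5 v) : G.valence v = 2 := by
  obtain ⟨-, ⟨e, hout, -⟩, ⟨f, hin, -⟩⟩ := h
  rw [valence, hout, hin, Finset.card_singleton, Finset.card_singleton]

lemma univalent_cond3 (hcond : ∀ v : V, G.Cond1 v ∨ G.Cond2 v ∨ G.Cond3 v ∨ G.Cond4 v ∨ G.Cond5 v)
    {v : V} (h : G.Univalent v) : G.Cond3 v := by
  have hv : G.valence v = 1 := h
  rcases hcond v with h1 | h2 | h3 | h4 | h5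
  · have := G.val1 h1; omega
  · have := G.val2 h2; omega
  · exact h3
  · have := G.val4 h4; omega
  · have := G.val5 h5; omega

/-- a univalent vertex has at most one out-neighbour -/
lemma univalent_out_unique {v a b : V} (h : G.Univalent v)
    (ha : (v, a) ∈ G.E) (hb : (v, b) ∈ G.E) : a = b := by
  by_contra hab
  have hsub : {((v, a) : V × V), (v, b)} ⊆ G.outE v := by
    intro x hx
    simp only [Finset.mem_insert, Finset.mem_singleton] at hx
    rcases hx with rfl | rfl <;> simp [outE, ha, hb]
  have h2 : 2 ≤ (G.outE v).card := by
    calc 2 = ({((v, a) : V × V), (v, b)} : Finset (V × V)).card :=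
          (Finset.card_pair (by simp [hab])).symm
      _ ≤ (G.outE v).card := Finset.card_le_card hsub
  have hval : (G.outE v).card + (G.inE v).card = 1 := h
  omega

-- pairwise exclusivity
lemma not_c1_c2 {v : V} (h1 : G.Cond1 v) (h2 : G.Cond2 v) : False := h1.1 h2.1
lemma not_c1_c3 {v : V} (h1 : G.Cond1 v) (h2 : G.Cond3 v) : False := h1.1 h2.1
lemma not_c1_c4 {v : V} (h1 : G.Cond1 v) (h2 : G.Cond4 v) : False := h1.1 h2.1
lemma not_c1_c5 {v : V} (h1 : G.Cond1 v) (h2 : G.Cond5 v) : False := h1.1 h2.1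

lemma not_c2_c3 {v : V} (h1 : G.Cond2 v) (h2 : G.Cond3 v) : False := by
  obtain ⟨-, -, ⟨e, f, -, hin, -⟩⟩ := h1
  rw [h2.2.2] at hin
  exact (Finset.insert_ne_empty e {f}) hin.symm

lemma not_c2_c4 {v : V} (h1 : G.Cond2 v) (h2 : G.Cond4 v) : False := by
  obtain ⟨-, -, ⟨e, f, hef, hin, -⟩⟩ := h1
  obtain ⟨-, -, ⟨f', hin', -⟩⟩ := h2
  rw [hin] at hin'
  have := congrArg Finset.card hin'
  rw [Finset.card_pair hef, Finset.card_singleton] at this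
  omega

lemma not_c2_c5 {v : V} (h1 : G.Cond2 v) (h2 : G.Cond5 v) : False := by
  obtain ⟨-, -, ⟨e, f, hef, hin, -⟩⟩ := h1
  obtain ⟨-, -, ⟨f', hin', -⟩⟩ := h2
  rw [hin] at hin'
  have := congrArg Finset.card hin'
  rw [Finset.card_pair hef, Finset.card_singleton] at this
  omega

lemma not_c3_c4 {v : V} (h1 : G.Cond3 v) (h2 : G.Cond4 v) : False := by
  obtain ⟨-, -, ⟨f, hin, -⟩⟩ := h2
  rw [h1.2.2] at hin
  exact (Finset.singleton_ne_empty f) hin.symm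

lemma not_c3_c5 {v : V} (h1 : G.Cond3 v) (h2 : G.Cond5 v) : False := by
  obtain ⟨-, -, ⟨f, hin, -⟩⟩ := h2
  rw [h1.2.2] at hin
  exact (Finset.singleton_ne_empty f) hin.symm

lemma not_c4_c5 {v : V} (h1 : G.Cond4 v) (h2 : G.Cond5 v) : False := by
  obtain ⟨-, ⟨e, hout, he⟩, -⟩ := h1
  obtain ⟨-, ⟨e', hout', he'⟩, -⟩ := h2
  rw [hout] at hout'
  have : e = e' := Finset.singleton_injective hout'
  exact G.not_mem_Ei he' (this ▸ he)

open Classical in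
/-- summing a function constant on each of the five classes. -/
lemma sum_classes (hcond : ∀ v : V, G.Cond1 v ∨ G.Cond2 v ∨ G.Cond3 v ∨ G.Cond4 v ∨ G.Cond5 v)
    (g : V → ℕ) (k1 k2 k3 k4 k5 : ℕ)
    (h1 : ∀ v, G.Cond1 v → g v = k1) (h2 : ∀ v, G.Cond2 v → g v = k2)
    (h3 : ∀ v, G.Cond3 v → g v = k3) (h4 : ∀ v, G.Cond4 v → g v = k4)
    (h5 : ∀ v, G.Cond5 v → g v = k5) (s : Finset V) :
    ∑ v ∈ s, g v =
      k1 * (s.filter (fun v => G.Cond1 v)).card + k2 * (s.filter (fun v => G.Cond2 v)).card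
      + k3 * (s.filter (fun v => G.Cond3 v)).card + k4 * (s.filter (fun v => G.Cond4 v)).card
      + k5 * (s.filter (fun v => G.Cond5 v)).card := by
  have hdisj : ∀ (p q : V → Prop), (∀ v, p v → q v → False) →
      Disjoint (s.filter (fun v => p v)) (s.filter (fun v => q v)) := by
    intro p q hpq
    rw [Finset.disjoint_left]
    intro a ha hb
    exact hpq a (Finset.mem_filter.1 ha).2 (Finset.mem_filter.1 hb).2
  have hcover : s.filter (fun v => G.Cond1 v) ∪ s.filter (fun v => G.Cond2 v)
      ∪ s.filter (fun v => G.Cond3 v) ∪ s.filter (fun v => G.Cond4 v)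
      ∪ s.filter (fun v => G.Cond5 v) = s := by
    ext v
    simp only [Finset.mem_union, Finset.mem_filter]
    constructor
    · rintro ((((⟨h, -⟩ | ⟨h, -⟩) | ⟨h, -⟩) | ⟨h, -⟩) | ⟨h, -⟩) <;> exact h
    · intro hv
      rcases hcond v with h | h | h | h | h
      · exact Or.inl (Or.inl (Or.inl (Or.inl ⟨hv, h⟩)))
      · exact Or.inl (Or.inl (Or.inl (Or.inr ⟨hv, h⟩)))
      · exact Or.inl (Or.inl (Or.inr ⟨hv, h⟩))
      · exact Or.inl (Or.inr ⟨hv, h⟩)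
      · exact Or.inr ⟨hv, h⟩
  have hsum : ∀ v ∈ s, g v = g v := fun _ _ => rfl
  calc ∑ v ∈ s, g v
      = ∑ v ∈ (s.filter (fun v => G.Cond1 v) ∪ s.filter (fun v => G.Cond2 v)
      ∪ s.filter (fun v => G.Cond3 v) ∪ s.filter (fun v => G.Cond4 v)
      ∪ s.filter (fun v => G.Cond5 v)), g v := by rw [hcover]
    _ = _ := by
        rw [Finset.sum_union, Finset.sum_union, Finset.sum_union, Finset.sum_union]
        · have e1 : ∑ v ∈ s.filter (fun v => G.Cond1 v), g v
              = k1 * (s.filter (fun v => G.Cond1 v)).card := by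
            rw [Finset.sum_congr rfl (fun v hv => h1 v (Finset.mem_filter.1 hv).2),
              Finset.sum_const, smul_eq_mul, mul_comm]
          have e2 : ∑ v ∈ s.filter (fun v => G.Cond2 v), g v
              = k2 * (s.filter (fun v => G.Cond2 v)).card := by
            rw [Finset.sum_congr rfl (fun v hv => h2 v (Finset.mem_filter.1 hv).2),
              Finset.sum_const, smul_eq_mul, mul_comm]
          have e3 : ∑ v ∈ s.filter (fun v => G.Cond3 v), g v
              = k3 * (s.filter (fun v => G.Cond3 v)).card := by
            rw [Finset.sum_congr rfl (fun v hv => h3 v (Finset.mem_filter.1 hv).2),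
              Finset.sum_const, smul_eq_mul, mul_comm]
          have e4 : ∑ v ∈ s.filter (fun v => G.Cond4 v), g v
              = k4 * (s.filter (fun v => G.Cond4 v)).card := by
            rw [Finset.sum_congr rfl (fun v hv => h4 v (Finset.mem_filter.1 hv).2),
              Finset.sum_const, smul_eq_mul, mul_comm]
          have e5 : ∑ v ∈ s.filter (fun v => G.Cond5 v), g v
              = k5 * (s.filter (fun v => G.Cond5 v)).card := by
            rw [Finset.sum_congr rfl (fun v hv => h5 v (Finset.mem_filter.1 hv).2),
              Finset.sum_const, smul_eq_mul, mul_comm]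
          rw [e1, e2, e3, e4, e5]
        · exact hdisj _ _ (fun v h h' => G.not_c1_c2 h h')
        · rw [Finset.disjoint_union_left]
          exact ⟨hdisj _ _ (fun v h h' => G.not_c1_c3 h h'),
            hdisj _ _ (fun v h h' => G.not_c2_c3 h h')⟩
        · rw [Finset.disjoint_union_left, Finset.disjoint_union_left]
          exact ⟨⟨hdisj _ _ (fun v h h' => G.not_c1_c4 h h'),
            hdisj _ _ (fun v h h' => G.not_c2_c4 h h')⟩,
            hdisj _ _ (fun v h h' => G.not_c3_c4 h h')⟩
        · rw [Finset.disjoint_union_left, Finset.disjoint_union_left,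
            Finset.disjoint_union_left]
          exact ⟨⟨⟨hdisj _ _ (fun v h h' => G.not_c1_c5 h h'),
            hdisj _ _ (fun v h h' => G.not_c2_c5 h h')⟩,
            hdisj _ _ (fun v h h' => G.not_c3_c5 h h')⟩,
            hdisj _ _ (fun v h h' => G.not_c4_c5 h h')⟩

/-- double counting edges by a vertex-valued projection -/
lemma card_filter_proj (T : Finset (V × V)) (f : V × V → V) (s : Finset V) :
    (T.filter fun e => f e ∈ s).card = ∑ v ∈ s, (T.filter fun e => f e = v).card := by
  rw [Finset.card_eq_sum_card_fiberwise
    (f := f) (s := T.filter fun e => f e ∈ s) (t := s) (fun e he => (Finset.mem_filter.1 he).2)]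
  refine Finset.sum_congr rfl fun v hv => congrArg Finset.card ?_
  rw [Finset.filter_filter]
  ext e
  simp only [Finset.mem_filter, and_congr_right_iff]
  intro _
  constructor
  · rintro ⟨-, h⟩; exact h
  · rintro rfl; exact ⟨hv, rfl⟩

end DiGraph


/-- For odd `n ≥ 3`, any BCR diagram `Γ`, and any nonempty proper subset
`S'` of the vertices,
`n·|S' ∩ V_i| + (n+2)·|S' ∩ V_e| < (n-1)·|E_i(S')| + (n+1)·|E_e(S')|`,
where `E_i(S')` (resp. `E_e(S')`) is the set of internal (resp. external)
edges with at least one endpoint in `S'`. -/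
theorem bcr_infinite_face_inequality {V : Type*} [DecidableEq V] [Fintype V]
    (G : DiGraph V) (hG : G.IsBCR) (n : ℕ) (hn : 3 ≤ n) (hodd : Odd n)
    (S' : Finset V) (hne : S'.Nonempty) (hproper : S' ≠ Finset.univ) :
    n * (S' ∩ G.Vi).card + (n + 2) * (S' ∩ G.Ve).card
      < (n - 1) * (G.Ei.filter fun e => e.1 ∈ S' ∨ e.2 ∈ S').card
        + (n + 1) * (G.Ee.filter fun e => e.1 ∈ S' ∨ e.2 ∈ S').card := by
  classical
  obtain ⟨hE, hEi, hconn, hcond⟩ := hG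
  -- class cardinalities within S' and globally
  set c1 := (S'.filter (fun v => G.Cond1 v)).card with hc1def
  set c2 := (S'.filter (fun v => G.Cond2 v)).card with hc2def
  set c3 := (S'.filter (fun v => G.Cond3 v)).card with hc3def
  set c4 := (S'.filter (fun v => G.Cond4 v)).card with hc4def
  set c5 := (S'.filter (fun v => G.Cond5 v)).card with hc5def
  set d1 := ((Finset.univ : Finset V).filter (fun v => G.Cond1 v)).card with hd1def
  set d2 := ((Finset.univ : Finset V).filter (fun v => G.Cond2 v)).card with hd2def
  set d3 := ((Finset.univ : Finset V).filter (fun v => G.Cond3 v)).card with hd3def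
  set d4 := ((Finset.univ : Finset V).filter (fun v => G.Cond4 v)).card with hd4def
  set d5 := ((Finset.univ : Finset V).filter (fun v => G.Cond5 v)).card with hd5def
  -- global degree sums
  have sumEi_fst : G.Ei.card = ∑ v ∈ Finset.univ, (G.Ei.filter fun e => e.1 = v).card := by
    have := DiGraph.card_filter_proj G.Ei (fun e => e.1) Finset.univ
    simpa using this
  have sumEi_snd : G.Ei.card = ∑ v ∈ Finset.univ, (G.Ei.filter fun e => e.2 = v).card := by
    have := DiGraph.card_filter_proj G.Ei (fun e => e.2) Finset.univ
    simpa using this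
  have sumEe_fst : G.Ee.card = ∑ v ∈ Finset.univ, (G.Ee.filter fun e => e.1 = v).card := by
    have := DiGraph.card_filter_proj G.Ee (fun e => e.1) Finset.univ
    simpa using this
  have sumEe_snd : G.Ee.card = ∑ v ∈ Finset.univ, (G.Ee.filter fun e => e.2 = v).card := by
    have := DiGraph.card_filter_proj G.Ee (fun e => e.2) Finset.univ
    simpa using this
  have sceif : ∀ s : Finset V, ∑ v ∈ s, (G.Ei.filter fun e => e.1 = v).card =
      0 * (s.filter (fun v => G.Cond1 v)).card + 1 * (s.filter (fun v => G.Cond2 v)).card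
      + 0 * (s.filter (fun v => G.Cond3 v)).card + 1 * (s.filter (fun v => G.Cond4 v)).card
      + 0 * (s.filter (fun v => G.Cond5 v)).card :=
    G.sum_classes hcond _ 0 1 0 1 0 (fun v h => (G.degs1 hEi h).1) (fun v h => (G.degs2 hEi h).1)
      (fun v h => (G.degs3 hEi h).1) (fun v h => (G.degs4 hEi h).1) (fun v h => (G.degs5 hEi h).1)
  have sceis : ∀ s : Finset V, ∑ v ∈ s, (G.Ei.filter fun e => e.2 = v).card =
      0 * (s.filter (fun v => G.Cond1 v)).card + 1 * (s.filter (fun v => G.Cond2 v)).card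
      + 0 * (s.filter (fun v => G.Cond3 v)).card + 0 * (s.filter (fun v => G.Cond4 v)).card
      + 1 * (s.filter (fun v => G.Cond5 v)).card :=
    G.sum_classes hcond _ 0 1 0 0 1 (fun v h => (G.degs1 hEi h).2.2.1) (fun v h => (G.degs2 hEi h).2.2.1)
      (fun v h => (G.degs3 hEi h).2.2.1) (fun v h => (G.degs4 hEi h).2.2.1) (fun v h => (G.degs5 hEi h).2.2.1)
  have sceef : ∀ s : Finset V, ∑ v ∈ s, (G.Ee.filter fun e => e.1 = v).card =
      1 * (s.filter (fun v => G.Cond1 v)).card + 0 * (s.filter (fun v => G.Cond2 v)).card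
      + 1 * (s.filter (fun v => G.Cond3 v)).card + 0 * (s.filter (fun v => G.Cond4 v)).card
      + 1 * (s.filter (fun v => G.Cond5 v)).card :=
    G.sum_classes hcond _ 1 0 1 0 1 (fun v h => (G.degs1 hEi h).2.1) (fun v h => (G.degs2 hEi h).2.1)
      (fun v h => (G.degs3 hEi h).2.1) (fun v h => (G.degs4 hEi h).2.1) (fun v h => (G.degs5 hEi h).2.1)
  have scees : ∀ s : Finset V, ∑ v ∈ s, (G.Ee.filter fun e => e.2 = v).card =
      2 * (s.filter (fun v => G.Cond1 v)).card + 1 * (s.filter (fun v => G.Cond2 v)).card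
      + 0 * (s.filter (fun v => G.Cond3 v)).card + 1 * (s.filter (fun v => G.Cond4 v)).card
      + 0 * (s.filter (fun v => G.Cond5 v)).card :=
    G.sum_classes hcond _ 2 1 0 1 0 (fun v h => (G.degs1 hEi h).2.2.2) (fun v h => (G.degs2 hEi h).2.2.2)
      (fun v h => (G.degs3 hEi h).2.2.2) (fun v h => (G.degs4 hEi h).2.2.2) (fun v h => (G.degs5 hEi h).2.2.2)
  -- global class count identities
  have hglob1 : d2 + d4 = d2 + d5 := by
    have h1 := (sumEi_fst.symm.trans sumEi_snd)
    rw [sceif, sceis] at h1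
    omega
  have hglob2 : d1 + d3 + d5 = 2 * d1 + d2 + d4 := by
    have h1 := (sumEe_fst.symm.trans sumEe_snd)
    rw [sceef, scees] at h1
    omega
  have hglob : d3 = d1 + d2 := by omega
  -- the leaf correspondence
  have hWL : ∀ w : V, G.Cond1 w ∨ G.Cond2 w →
      (G.leafOf w, w) ∈ G.E ∧ G.Univalent (G.leafOf w) := by
    intro w hw
    apply G.leafOf_spec
    rcases hw with hw | hw
    · obtain ⟨-, -, -, ⟨e, he, hu⟩⟩ := hw
      rw [DiGraph.inE, Finset.mem_filter] at he
      refine ⟨e.1, ?_, hu⟩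
      have : (e.1, w) = e := by rw [← he.2]
      rw [this]; exact he.1
    · obtain ⟨-, -, ⟨e, f, hef, hin, he, hf, hu⟩⟩ := hw
      have hfin : f ∈ G.inE w := by rw [hin]; simp
      rw [DiGraph.inE, Finset.mem_filter] at hfin
      refine ⟨f.1, ?_, hu⟩
      have : (f.1, w) = f := by rw [← hfin.2]
      rw [this]; exact hfin.1
  have hLW : ∀ v : V, G.Cond3 v →
      (G.Cond1 (G.tgt v) ∨ G.Cond2 (G.tgt v)) ∧ (v, G.tgt v) ∈ G.Ee ∧
        G.leafOf (G.tgt v) = v := by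
    -- via surjectivity of `leafOf`
    have hdisj12 : Disjoint ((Finset.univ : Finset V).filter (fun v => G.Cond1 v))
        ((Finset.univ : Finset V).filter (fun v => G.Cond2 v)) := by
      rw [Finset.disjoint_left]
      intro a ha hb
      exact G.not_c1_c2 (Finset.mem_filter.1 ha).2 (Finset.mem_filter.1 hb).2
    set W := (Finset.univ : Finset V).filter (fun v => G.Cond1 v)
        ∪ (Finset.univ : Finset V).filter (fun v => G.Cond2 v) with hWdef
    have hWmem : ∀ w : V, w ∈ W ↔ (G.Cond1 w ∨ G.Cond2 w) := by
      intro w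
      simp [hWdef, Finset.mem_union, Finset.mem_filter]
    have hWcard : W.card = d1 + d2 := by
      rw [hWdef, Finset.card_union_of_disjoint hdisj12]
    set L := (Finset.univ : Finset V).filter (fun v => G.Cond3 v) with hLdef
    have hLmem : ∀ v : V, v ∈ L ↔ G.Cond3 v := by
      intro v; simp [hLdef, Finset.mem_filter]
    have hinj : Set.InjOn G.leafOf W := by
      intro w1 hw1 w2 hw2 heq
      have h1 := hWL w1 ((hWmem w1).1 hw1)
      have h2 := hWL w2 ((hWmem w2).1 hw2)
      rw [heq] at h1
      exact G.univalent_out_unique h2.2 h1.1 h2.1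
    have himg : Finset.image G.leafOf W = L := by
      apply Finset.eq_of_subset_of_card_le
      · intro v hv
        obtain ⟨w, hw, rfl⟩ := Finset.mem_image.1 hv
        exact (hLmem _).2 (G.univalent_cond3 hcond (hWL w ((hWmem w).1 hw)).2)
      · rw [Finset.card_image_of_injOn hinj, hWcard, ← hglob]
    intro v hv
    have hvL : v ∈ L := (hLmem v).2 hv
    rw [← himg] at hvL
    obtain ⟨w, hw, hwv⟩ := Finset.mem_image.1 hvL
    obtain ⟨-, ⟨e, hout, he⟩, -⟩ := hv
    have hedge : (v, w) ∈ G.E := by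
      have := (hWL w ((hWmem w).1 hw)).1
      rwa [hwv] at this
    have hvw_out : ((v, w) : V × V) ∈ G.outE v := by
      rw [DiGraph.outE, Finset.mem_filter]; exact ⟨hedge, rfl⟩
    have hvw_e : ((v, w) : V × V) = e := by
      rw [hout] at hvw_out; exact Finset.mem_singleton.1 hvw_out
    have htgt_edge : (v, G.tgt v) ∈ G.E := G.tgt_spec ⟨w, hedge⟩
    have htgt_out : ((v, G.tgt v) : V × V) ∈ G.outE v := by
      rw [DiGraph.outE, Finset.mem_filter]; exact ⟨htgt_edge, rfl⟩
    have htgt_e : ((v, G.tgt v) : V × V) = e := by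
      rw [hout] at htgt_out; exact Finset.mem_singleton.1 htgt_out
    have htgtw : G.tgt v = w := by
      have := htgt_e.trans hvw_e.symm
      exact (Prod.mk.injEq _ _ _ _ ▸ this).2
    rw [htgtw]
    exact ⟨(hWmem w).1 hw, hvw_e ▸ he, hwv⟩
  -- S'-relative degree sums
  have s1 : (G.Ei.filter fun e => e.1 ∈ S').card = c2 + c4 := by
    rw [DiGraph.card_filter_proj G.Ei (fun e => e.1) S', sceif S']; omega
  have s2 : (G.Ei.filter fun e => e.2 ∈ S').card = c2 + c5 := by
    rw [DiGraph.card_filter_proj G.Ei (fun e => e.2) S', sceis S']; omega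
  have s3 : (G.Ee.filter fun e => e.1 ∈ S').card = c1 + c3 + c5 := by
    rw [DiGraph.card_filter_proj G.Ee (fun e => e.1) S', sceef S']; omega
  have s4 : (G.Ee.filter fun e => e.2 ∈ S').card = 2 * c1 + c2 + c4 := by
    rw [DiGraph.card_filter_proj G.Ee (fun e => e.2) S', scees S']; omega
  -- inclusion-exclusion
  have hmono_i : (G.Ei.filter fun e => e.1 ∈ S' ∧ e.2 ∈ S')
      ⊆ (G.Ei.filter fun e => e.1 ∈ S' ∨ e.2 ∈ S') := by
    intro x hx; rw [Finset.mem_filter] at hx ⊢; exact ⟨hx.1, Or.inl hx.2.1⟩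
  have hmono_e : (G.Ee.filter fun e => e.1 ∈ S' ∧ e.2 ∈ S')
      ⊆ (G.Ee.filter fun e => e.1 ∈ S' ∨ e.2 ∈ S') := by
    intro x hx; rw [Finset.mem_filter] at hx ⊢; exact ⟨hx.1, Or.inl hx.2.1⟩
  set Fi := (G.Ei.filter fun e => e.1 ∈ S' ∨ e.2 ∈ S').card with hFidef
  set Fe := (G.Ee.filter fun e => e.1 ∈ S' ∨ e.2 ∈ S').card with hFedef
  set Gi := (G.Ei.filter fun e => e.1 ∈ S' ∧ e.2 ∈ S').card with hGidef
  set Ge := (G.Ee.filter fun e => e.1 ∈ S' ∧ e.2 ∈ S').card with hGedef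
  have hsubi : Gi ≤ Fi := Finset.card_le_card hmono_i
  have hsube : Ge ≤ Fe := Finset.card_le_card hmono_e
  have iei : Fi + Gi = (c2 + c4) + (c2 + c5) := by
    rw [hFidef, hGidef, Finset.filter_or, Finset.filter_and,
      Finset.card_union_add_card_inter, s1, s2]
  have iee : Fe + Ge = (c1 + c3 + c5) + (2 * c1 + c2 + c4) := by
    rw [hFedef, hGedef, Finset.filter_or, Finset.filter_and,
      Finset.card_union_add_card_inter, s3, s4]
  -- vertex counts
  have ha : (S' ∩ G.Vi).card = c2 + c3 + c4 + c5 := by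
    rw [← Finset.filter_mem_eq_inter, Finset.card_filter,
      G.sum_classes hcond _ 0 1 1 1 1
        (fun v h => if_neg h.1) (fun v h => if_pos h.1) (fun v h => if_pos h.1)
        (fun v h => if_pos h.1) (fun v h => if_pos h.1) S']
    omega
  have hb : (S' ∩ G.Ve).card = c1 := by
    rw [← Finset.filter_mem_eq_inter, Finset.card_filter,
      G.sum_classes hcond (fun v => if v ∈ G.Ve then 1 else 0) 1 0 0 0 0
        (fun v h => if_pos (show v ∈ G.Ve from Finset.mem_compl.2 h.1))
        (fun v h => if_neg (show v ∉ G.Ve from fun hc => (Finset.mem_compl.1 hc) h.1))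
        (fun v h => if_neg (show v ∉ G.Ve from fun hc => (Finset.mem_compl.1 hc) h.1))
        (fun v h => if_neg (show v ∉ G.Ve from fun hc => (Finset.mem_compl.1 hc) h.1))
        (fun v h => if_neg (show v ∉ G.Ve from fun hc => (Finset.mem_compl.1 hc) h.1)) S']
    omega
  -- a crossing edge exists
  obtain ⟨v0, hv0⟩ := hne
  obtain ⟨w0, hw0⟩ : ∃ w, w ∉ S' := by
    by_contra hcon
    push_neg at hcon
    exact hproper (Finset.eq_univ_iff_forall.2 hcon)
  have hcross : ∃ e ∈ G.E, (e.1 ∈ S' ∧ e.2 ∉ S') ∨ (e.1 ∉ S' ∧ e.2 ∈ S') := by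
    have key : ∀ w, Relation.ReflTransGen G.Adj v0 w → w ∉ S' →
        ∃ e ∈ G.E, (e.1 ∈ S' ∧ e.2 ∉ S') ∨ (e.1 ∉ S' ∧ e.2 ∈ S') := by
      intro w h
      induction h with
      | refl => intro hcon; exact absurd hv0 hcon
      | @tail b c hab hbc ih =>
        intro hcon
        by_cases hb : b ∈ S'
        · rcases hbc with hbc | hbc
          · exact ⟨(b, c), hbc, Or.inl ⟨hb, hcon⟩⟩
          · exact ⟨(c, b), hbc, Or.inr ⟨hcon, hb⟩⟩
        · exact ih hb
    exact key w0 (hconn v0 w0) hw0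
  have hbound : Gi + 1 ≤ Fi ∨ Ge + 1 ≤ Fe := by
    obtain ⟨e, heE, hcr⟩ := hcross
    have hor : e.1 ∈ S' ∨ e.2 ∈ S' := by tauto
    have hnand : ¬(e.1 ∈ S' ∧ e.2 ∈ S') := by tauto
    by_cases hi : e ∈ G.Ei
    · left
      have : Gi < Fi := by
        apply Finset.card_lt_card
        rw [Finset.ssubset_iff_of_subset hmono_i]
        exact ⟨e, Finset.mem_filter.2 ⟨hi, hor⟩,
          fun hc => hnand (Finset.mem_filter.1 hc).2⟩
      omega
    · right
      have hee : e ∈ G.Ee := Finset.mem_sdiff.2 ⟨heE, hi⟩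
      have : Ge < Fe := by
        apply Finset.card_lt_card
        rw [Finset.ssubset_iff_of_subset hmono_e]
        exact ⟨e, Finset.mem_filter.2 ⟨hee, hor⟩,
          fun hc => hnand (Finset.mem_filter.1 hc).2⟩
      omega
  -- the key global inequality: c3 + Ge ≤ c1 + c2 + Fe
  have hF5 : c3 + Ge ≤ c1 + c2 + Fe := by
    set T3S := S'.filter (fun v => G.Cond3 v) with hT3Sdef
    have hsplit : (T3S.filter (fun v => G.tgt v ∈ S')).card
        + (T3S.filter (fun v => G.tgt v ∉ S')).card = T3S.card :=
      Finset.card_filter_add_card_filter_not _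
    have hT3c : T3S.card = c3 := rfl
    have hP : (T3S.filter (fun v => G.tgt v ∈ S')).card ≤ c1 + c2 := by
      have hle : (T3S.filter (fun v => G.tgt v ∈ S')).card ≤
          ((S'.filter (fun v => G.Cond1 v)) ∪ (S'.filter (fun v => G.Cond2 v))).card := by
        apply Finset.card_le_card_of_injOn G.tgt
        · intro v hv
          rw [Finset.mem_coe, Finset.mem_filter, hT3Sdef, Finset.mem_filter] at hv
          obtain ⟨⟨hvS, hv3⟩, hvt⟩ := hv
          rcases (hLW v hv3).1 with h | h
          · exact Finset.mem_union_left _ (Finset.mem_filter.2 ⟨hvt, h⟩)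
          · exact Finset.mem_union_right _ (Finset.mem_filter.2 ⟨hvt, h⟩)
        · intro v1 hv1 v2 hv2 heq
          simp only [Finset.coe_filter, Set.mem_setOf_eq, hT3Sdef, Finset.mem_filter] at hv1 hv2
          have e1 := (hLW v1 hv1.1.2).2.2
          have e2 := (hLW v2 hv2.1.2).2.2
          rw [← e1, ← e2, heq]
      calc (T3S.filter (fun v => G.tgt v ∈ S')).card ≤ _ := hle
        _ ≤ c1 + c2 := Finset.card_union_le _ _
    have hQ : (T3S.filter (fun v => G.tgt v ∉ S')).card + Ge ≤ Fe := by
      have h1 : (T3S.filter (fun v => G.tgt v ∉ S')).card ≤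
          ((G.Ee.filter fun e => e.1 ∈ S' ∨ e.2 ∈ S')
            \ (G.Ee.filter fun e => e.1 ∈ S' ∧ e.2 ∈ S')).card := by
        apply Finset.card_le_card_of_injOn (fun v => (v, G.tgt v))
        · intro v hv
          rw [Finset.mem_coe, Finset.mem_filter, hT3Sdef, Finset.mem_filter] at hv
          obtain ⟨⟨hvS, hv3⟩, hvt⟩ := hv
          rw [Finset.mem_coe, Finset.mem_sdiff]
          constructor
          · exact Finset.mem_filter.2 ⟨(hLW v hv3).2.1, Or.inl hvS⟩
          · intro hc
            exact hvt (Finset.mem_filter.1 hc).2.2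
        · intro v1 _ v2 _ heq
          exact congrArg Prod.fst heq
      have h2 : ((G.Ee.filter fun e => e.1 ∈ S' ∨ e.2 ∈ S')
          \ (G.Ee.filter fun e => e.1 ∈ S' ∧ e.2 ∈ S')).card = Fe - Ge := by
        rw [Finset.card_sdiff_of_subset hmono_e]
      omega
    omega
  -- final arithmetic
  clear_value Fi Fe Gi Ge d1 d2 d3 d4 d5
  clear hWL hLW sceif sceis sceef scees sumEi_fst sumEi_snd sumEe_fst sumEe_snd
  clear hmono_i hmono_e hconn hcond hE hEi hodd hproper hv0 hw0 s1 s2 s3 s4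
  obtain ⟨m, rfl⟩ : ∃ m, n = m + 1 := ⟨n - 1, by omega⟩
  have hm : 2 ≤ m := by omega
  rw [ha, hb]
  simp only [Nat.add_sub_cancel]
  have me1 : m * (Fi + Gi) = m * ((c2 + c4) + (c2 + c5)) := by rw [iei]
  have me2 : m * (Fe + Ge) = m * ((c1 + c3 + c5) + (2 * c1 + c2 + c4)) := by rw [iee]
  have mF5 : m * (c3 + Ge) ≤ m * (c1 + c2 + Fe) := Nat.mul_le_mul_left m hF5
  have msubi : m * Gi ≤ m * Fi := Nat.mul_le_mul_left m hsubi
  rcases hbound with hcase | hcase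
  · have mcase : m * (Gi + 1) ≤ m * Fi := Nat.mul_le_mul_left m hcase
    linarith [me1, me2, mF5, msubi, mcase, hsube, iei, iee, hm]
  · linarith [me1, me2, mF5, msubi, hcase, hsube, iei, iee, hm]
end

section
/- Let n ≥ 3 be an odd integer and let Γ be a BCR diagram. Let S1 and S2 be disjoint subsets of V(Γ) with S1 ∪ S2 ≠ V(Γ), and let E' be the set of edges of Γ that do not have both endpoints in S1 and do not have both endpoints in S2. Then n·|V_i(Γ) ∖ (S1 ∪ S2)| + (n+2)·|V_e(Γ) ∖ (S1 ∪ S2)| ≤ (n−1)·|E' ∩ E_i(Γ)| + (n+1)·|E' ∩ E_e(Γ)|, and this inequality is an equality if and only if S1 = ∅ and S2 = ∅. (This is the combinatorial content of the paper's lemma comparing the dimension of the configuration space C_{Γ_{S1,S2}}(ψ_triv) with the sum of the degrees n(e) of the spheres associated to the edges of Γ_{S1,S2}.) -/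
open Finset

/-!
Split the sphere degree of every edge between its endpoints: an internal edge (degree `n - 1`)
gives `n - 1` to its source and `0` to its target, an external edge (degree `n + 1`) gives `n`
to its source and `1` to its target. Checking the five vertex types, every vertex of a BCR
diagram receives exactly its own dimension (`n` if internal, `n + 2` if external). The edges at
a vertex outside `S = S1 ∪ S2` all survive in `E'`, so the left-hand side is the part of the
right-hand side received outside `S`, whence the inequality.

Equality means that no edge of `E'` starts in `S` and no external edge of `E'` ends in `S`, so
`S` is closed under successors and external predecessors. Every vertex has exactly one outgoing
edge and every trivalent vertex receives a leg from its own univalent vertex; counting edges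
leaving and entering `S` then shows that no edge enters `S` from outside. So `S1` and `S2` are
unions of components, and connectedness together with `S ≠ V` makes them empty.
-/

lemma Finset.sum_filter_eq_sum_iff {ι M : Type*} [AddCommMonoid M] [PartialOrder M]
    [CanonicallyOrderedAdd M] [IsLeftCancelAdd M] {s : Finset ι} {p : ι → Prop}
    [DecidablePred p] {f : ι → M} :
    ∑ i ∈ s with p i, f i = ∑ i ∈ s, f i ↔ ∀ i ∈ s, ¬p i → f i = 0 := by
  rw [← sum_filter_add_sum_filter_not s p f, left_eq_add, sum_eq_zero_iff]
  simp only [mem_filter, and_imp]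

namespace DiGraph

variable {V : Type*} [DecidableEq V] [Fintype V] {G : DiGraph V}

lemma mem_Ee {e : V × V} : e ∈ G.Ee ↔ e ∈ G.E ∧ e ∉ G.Ei := mem_sdiff

lemma mem_outE {v : V} {e : V × V} : e ∈ G.outE v ↔ e ∈ G.E ∧ e.1 = v := mem_filter

lemma mem_inE {v : V} {e : V × V} : e ∈ G.inE v ↔ e ∈ G.E ∧ e.2 = v := mem_filter

variable (G) in
def vertexDim (n : ℕ) (v : V) : ℕ := if v ∈ G.Vi then n else n + 2

variable (G) in
def sourceShare (n : ℕ) (e : V × V) : ℕ := if e ∈ G.Ei then n - 1 else n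

variable (G) in
def targetShare (e : V × V) : ℕ := if e ∈ G.Ei then 0 else 1

-- The edge set `E'` of the blown-up diagram `Γ_{S1,S2}`.
variable (G) in
def blowUpEdges (S1 S2 : Finset V) : Finset (V × V) :=
  G.E.filter fun e => ¬(e.1 ∈ S1 ∧ e.2 ∈ S1) ∧ ¬(e.1 ∈ S2 ∧ e.2 ∈ S2)

lemma blowUpEdges_comm (S1 S2 : Finset V) :
    G.blowUpEdges S1 S2 = G.blowUpEdges S2 S1 := by
  simp only [blowUpEdges, and_comm]

lemma notMem_blowUpEdges {S1 S2 : Finset V} {e : V × V} (he : e ∈ G.E) :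
    e ∉ G.blowUpEdges S1 S2 ↔ (e.1 ∈ S1 ∧ e.2 ∈ S1) ∨ (e.1 ∈ S2 ∧ e.2 ∈ S2) := by
  simp only [blowUpEdges, mem_filter, he, true_and]
  tauto

lemma mem_blowUpEdges_of_notMem {S1 S2 : Finset V} {e : V × V} (he : e ∈ G.E)
    (h : e.1 ∉ S1 ∪ S2 ∨ e.2 ∉ S1 ∪ S2) : e ∈ G.blowUpEdges S1 S2 := by
  by_contra hF
  rw [notMem_blowUpEdges he] at hF
  simp only [mem_union] at h
  tauto

lemma sourceShare_pos {n : ℕ} (hn : 2 ≤ n) (e : V × V) : 0 < G.sourceShare n e := by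
  unfold sourceShare; split_ifs <;> omega

lemma targetShare_eq_zero_iff {e : V × V} : G.targetShare e = 0 ↔ e ∈ G.Ei := by
  unfold targetShare; split_ifs <;> simp [*]

lemma sum_vertexDim_compl (n : ℕ) (A : Finset V) :
    ∑ v ∈ Aᶜ, G.vertexDim n v = n * (G.Vi \ A).card + (n + 2) * (G.Ve \ A).card := by
  have hVi : Aᶜ.filter (· ∈ G.Vi) = G.Vi \ A := by ext; simp [and_comm]
  have hVe : Aᶜ.filter (· ∉ G.Vi) = G.Ve \ A := by ext; simp [Ve, and_comm]
  unfold vertexDim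
  rw [sum_ite, sum_const, sum_const, hVi, hVe, smul_eq_mul, smul_eq_mul,
    mul_comm, mul_comm (G.Ve \ A).card]

lemma sum_sourceShare_add_targetShare {F : Finset (V × V)} (hF : F ⊆ G.E) (n : ℕ) :
    ∑ e ∈ F, (G.sourceShare n e + G.targetShare e)
      = (n - 1) * (F ∩ G.Ei).card + (n + 1) * (F ∩ G.Ee).card := by
  have hEi : F.filter (· ∈ G.Ei) = F ∩ G.Ei := filter_mem_eq_inter
  have hEe : F.filter (· ∉ G.Ei) = F ∩ G.Ee := by
    ext e; simp only [mem_filter, mem_inter, mem_Ee]; grind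
  have hshare (e : V × V) :
      G.sourceShare n e + G.targetShare e = if e ∈ G.Ei then n - 1 else n + 1 := by
    unfold sourceShare targetShare; split_ifs <;> rfl
  rw [sum_congr rfl fun e _ => hshare e, sum_ite, sum_const, sum_const, hEi, hEe, smul_eq_mul,
    smul_eq_mul, mul_comm, mul_comm (F ∩ G.Ee).card]

instance : DecidablePred G.Univalent :=
  fun v => inferInstanceAs (Decidable (G.valence v = 1))

instance : DecidablePred G.Trivalent :=
  fun v => inferInstanceAs (Decidable (G.valence v = 3))

namespace IsBCR

variable (hG : G.IsBCR)
include hG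

lemma card_outE (v : V) : (G.outE v).card = 1 := by
  obtain ⟨e, he⟩ : ∃ e, G.outE v = {e} := by
    rcases hG.2.2.2 v with h | h | h | h | h <;> exact ⟨_, h.2.1.choose_spec.1⟩
  rw [he, card_singleton]

lemma card_inE_le (v : V) : (G.inE v).card ≤ 2 := by
  rcases hG.2.2.2 v with ⟨-, -, ⟨a, b, -, h, -⟩, -⟩ | ⟨-, -, ⟨a, b, -, h, -⟩⟩ | ⟨-, -, h⟩ |
    ⟨-, -, a, h, -⟩ | ⟨-, -, a, h, -⟩ <;> rw [h]
  all_goals simp [card_le_two]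

lemma eq_of_mem_E {u v w : V} (hv : (u, v) ∈ G.E) (hw : (u, w) ∈ G.E) : v = w :=
  congrArg Prod.snd <| card_le_one.1 (hG.card_outE u).le _ (mem_outE.2 ⟨hv, rfl⟩) _
    (mem_outE.2 ⟨hw, rfl⟩)

lemma card_inE_add_ite_univalent (v : V) :
    (G.inE v).card + (if G.Univalent v then 1 else 0) = 1 + if G.Trivalent v then 1 else 0 := by
  have hout := hG.card_outE v
  have hin := hG.card_inE_le v
  split_ifs with h1 h3 h3 <;> unfold Univalent Trivalent valence at * <;> omega

lemma exists_leg_of_trivalent {v : V} (hv : G.Trivalent v) :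
    ∃ u, G.Univalent u ∧ (u, v) ∈ G.Ee := by
  have hin : (G.inE v).card = 2 := by
    have := hG.card_outE v
    unfold Trivalent valence at hv
    omega
  rcases hG.2.2.2 v with ⟨-, -, ⟨a, b, -, hab, ha, hb⟩, g, hg, hgu⟩ |
    ⟨-, -, ⟨a, f, -, hab, -, hf, hfu⟩⟩ | ⟨-, -, h⟩ | ⟨-, -, a, h, -⟩ | ⟨-, -, a, h, -⟩
  · refine ⟨g.1, hgu, ?_⟩
    have hgv : (g.1, v) = g := Prod.ext rfl (mem_inE.1 hg).2.symm
    rw [hgv]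
    rw [hab, mem_insert, mem_singleton] at hg
    rcases hg with rfl | rfl <;> assumption
  · have hfv : (f.1, v) = f :=
      Prod.ext rfl (mem_inE.1 (by simp [hab] : f ∈ G.inE v)).2.symm
    exact ⟨f.1, hfu, hfv ▸ hf⟩
  all_goals simp [h] at hin

theorem vertexDim_eq_sum_outE_add_sum_inE {n : ℕ} (hn : 1 ≤ n) (v : V) :
    G.vertexDim n v
      = ∑ e ∈ G.outE v, G.sourceShare n e + ∑ e ∈ G.inE v, G.targetShare e := by
  rcases hG.2.2.2 v with ⟨hv, ⟨e, hout, he⟩, ⟨a, b, hab, hin, ha, hb⟩, -⟩ |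
    ⟨hv, ⟨e, hout, he⟩, ⟨a, b, hab, hin, ha, hb, -⟩⟩ | ⟨hv, ⟨e, hout, he⟩, hin⟩ |
    ⟨hv, ⟨e, hout, he⟩, ⟨a, hin, ha⟩⟩ | ⟨hv, ⟨e, hout, he⟩, ⟨a, hin, ha⟩⟩
  all_goals
    simp only [mem_Ee] at *
    simp [vertexDim, sourceShare, targetShare, *]
    try omega

lemma eq_univ_of_adj_closed {A : Finset V} (hA : A.Nonempty)
    (hclosed : ∀ a ∈ A, ∀ b, G.Adj a b → b ∈ A) : A = univ := by
  obtain ⟨a, ha⟩ := hA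
  refine eq_univ_of_forall fun w => ?_
  induction hG.2.2.1 a w with
  | refl => exact ha
  | tail _ hadj ih => exact hclosed _ ih _ hadj

theorem sum_vertexDim_eq_sum_filter {n : ℕ} (hn : 1 ≤ n) {F : Finset (V × V)}
    (hF : F ⊆ G.E) {T : Finset V} (hT : ∀ e ∈ G.E, e.1 ∈ T ∨ e.2 ∈ T → e ∈ F) :
    ∑ v ∈ T, G.vertexDim n v
      = ∑ e ∈ F with e.1 ∈ T, G.sourceShare n e + ∑ e ∈ F with e.2 ∈ T, G.targetShare e := by
  have hout : ∀ v ∈ T, G.outE v = F.filter (·.1 = v) := fun v hv => by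
    ext e; simp only [mem_outE, mem_filter]; grind
  have hin : ∀ v ∈ T, G.inE v = F.filter (·.2 = v) := fun v hv => by
    ext e; simp only [mem_inE, mem_filter]; grind
  rw [sum_congr rfl fun v _ => hG.vertexDim_eq_sum_outE_add_sum_inE hn v, sum_add_distrib,
    ← sum_fiberwise_eq_sum_filter, ← sum_fiberwise_eq_sum_filter]
  congr 1 <;> refine sum_congr rfl fun v hv => ?_
  · rw [hout v hv]
  · rw [hin v hv]

lemma card_filter_fst_mem (S : Finset V) : (G.E.filter (·.1 ∈ S)).card = S.card := by
  rw [card_eq_sum_ones, ← sum_fiberwise_eq_sum_filter, card_eq_sum_ones S]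
  exact sum_congr rfl fun v _ => (card_eq_sum_ones _).symm.trans (hG.card_outE v)

lemma card_filter_snd_mem_add_card_univalent (S : Finset V) :
    (G.E.filter (·.2 ∈ S)).card + (S.filter G.Univalent).card
      = S.card + (S.filter G.Trivalent).card := by
  rw [card_eq_sum_ones, ← sum_fiberwise_eq_sum_filter, card_filter, card_filter,
    card_eq_sum_ones S, ← sum_add_distrib, ← sum_add_distrib]
  exact sum_congr rfl fun v _ => by
    rw [← card_eq_sum_ones]
    exact hG.card_inE_add_ite_univalent v

lemma card_trivalent_le_card_univalent {S : Finset V} (hleg : ∀ e ∈ G.Ee, e.2 ∈ S → e.1 ∈ S) :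
    (S.filter G.Trivalent).card ≤ (S.filter G.Univalent).card := by
  refine card_le_card_of_forall_subsingleton (fun v u => (u, v) ∈ G.E) (fun v hv => ?_)
    fun u _ v hv w hw => hG.eq_of_mem_E hv.2 hw.2
  rw [mem_filter] at hv
  obtain ⟨u, hu, huv⟩ := hG.exists_leg_of_trivalent hv.2
  exact ⟨u, mem_filter.2 ⟨hleg _ huv hv.1, hu⟩, (mem_Ee.1 huv).1⟩

theorem source_mem_of_target_mem {S : Finset V} (hout : ∀ e ∈ G.E, e.1 ∈ S → e.2 ∈ S)
    (hleg : ∀ e ∈ G.Ee, e.2 ∈ S → e.1 ∈ S) {e : V × V} (he : e ∈ G.E) (h2 : e.2 ∈ S) :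
    e.1 ∈ S := by
  have hsub : G.E.filter (·.1 ∈ S) ⊆ G.E.filter (·.2 ∈ S) := fun e he => by
    rw [mem_filter] at he ⊢
    exact ⟨he.1, hout e he.1 he.2⟩
  have hcard := hG.card_filter_snd_mem_add_card_univalent S
  have heq := eq_of_subset_of_card_le hsub <| by
    rw [hG.card_filter_fst_mem S]
    have := hG.card_trivalent_le_card_univalent hleg
    omega
  have he' : e ∈ G.E.filter (·.1 ∈ S) := heq ▸ mem_filter.2 ⟨he, h2⟩
  exact (mem_filter.1 he').2

lemma eq_empty_of_forall_incident_notMem_blowUpEdges {S1 S2 : Finset V}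
    (hdisj : Disjoint S1 S2) (hproper : S1 ∪ S2 ≠ univ)
    (hinc : ∀ e ∈ G.E, e.1 ∈ S1 ∪ S2 ∨ e.2 ∈ S1 ∪ S2 → e ∉ G.blowUpEdges S1 S2) :
    S1 = ∅ := by
  by_contra hne
  refine hproper (eq_univ_of_forall fun w => mem_union_left _ ?_)
  rw [hG.eq_univ_of_adj_closed (nonempty_iff_ne_empty.2 hne) fun a ha b hab => ?_]
  · exact mem_univ w
  have ha2 : a ∉ S2 := disjoint_left.1 hdisj ha
  rcases hab with h | h
  · have := (notMem_blowUpEdges h).1 (hinc _ h (Or.inl (mem_union_left _ ha)))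
    tauto
  · have := (notMem_blowUpEdges h).1 (hinc _ h (Or.inr (mem_union_left _ ha)))
    tauto

theorem eq_empty_of_forall_blowUpEdges {S1 S2 : Finset V} (hdisj : Disjoint S1 S2)
    (hproper : S1 ∪ S2 ≠ univ) (hsrc : ∀ e ∈ G.blowUpEdges S1 S2, e.1 ∉ S1 ∪ S2)
    (htgt : ∀ e ∈ G.blowUpEdges S1 S2, e ∈ G.Ee → e.2 ∉ S1 ∪ S2) : S1 = ∅ ∧ S2 = ∅ := by
  have inside : ∀ e ∈ G.E, e ∉ G.blowUpEdges S1 S2 → e.1 ∈ S1 ∪ S2 ∧ e.2 ∈ S1 ∪ S2 :=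
    fun e he hF => by rw [notMem_blowUpEdges he] at hF; grind
  have hout : ∀ e ∈ G.E, e.1 ∈ S1 ∪ S2 → e.2 ∈ S1 ∪ S2 := fun e he h1 =>
    (inside e he fun hF => hsrc e hF h1).2
  have hleg : ∀ e ∈ G.Ee, e.2 ∈ S1 ∪ S2 → e.1 ∈ S1 ∪ S2 := fun e he h2 =>
    (inside e (mem_Ee.1 he).1 fun hF => htgt e hF he h2).1
  have hinc : ∀ e ∈ G.E, e.1 ∈ S1 ∪ S2 ∨ e.2 ∈ S1 ∪ S2 → e ∉ G.blowUpEdges S1 S2 := by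
    rintro e he (h1 | h2) hF
    · exact hsrc e hF h1
    · exact hsrc e hF (hG.source_mem_of_target_mem hout hleg he h2)
  refine ⟨hG.eq_empty_of_forall_incident_notMem_blowUpEdges hdisj hproper hinc,
    hG.eq_empty_of_forall_incident_notMem_blowUpEdges hdisj.symm
      (union_comm S1 S2 ▸ hproper) ?_⟩
  rwa [union_comm, blowUpEdges_comm]

end IsBCR

end DiGraph

theorem bcr_blown_up_dimension_inequality_general {V : Type*} [DecidableEq V] [Fintype V]
    (G : DiGraph V) (hG : G.IsBCR) (n : ℕ) (hn : 3 ≤ n)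
    (S1 S2 : Finset V) (hdisj : Disjoint S1 S2)
    (hproper : S1 ∪ S2 ≠ Finset.univ) :
    n * (G.Vi \ (S1 ∪ S2)).card + (n + 2) * (G.Ve \ (S1 ∪ S2)).card
      ≤ (n - 1) * ((G.E.filter fun e =>
            ¬(e.1 ∈ S1 ∧ e.2 ∈ S1) ∧ ¬(e.1 ∈ S2 ∧ e.2 ∈ S2)) ∩ G.Ei).card
        + (n + 1) * ((G.E.filter fun e =>
            ¬(e.1 ∈ S1 ∧ e.2 ∈ S1) ∧ ¬(e.1 ∈ S2 ∧ e.2 ∈ S2)) ∩ G.Ee).card ∧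
    (n * (G.Vi \ (S1 ∪ S2)).card + (n + 2) * (G.Ve \ (S1 ∪ S2)).card
      = (n - 1) * ((G.E.filter fun e =>
            ¬(e.1 ∈ S1 ∧ e.2 ∈ S1) ∧ ¬(e.1 ∈ S2 ∧ e.2 ∈ S2)) ∩ G.Ei).card
        + (n + 1) * ((G.E.filter fun e =>
            ¬(e.1 ∈ S1 ∧ e.2 ∈ S1) ∧ ¬(e.1 ∈ S2 ∧ e.2 ∈ S2)) ∩ G.Ee).card
      ↔ S1 = ∅ ∧ S2 = ∅) := by
  rw [show (G.E.filter fun e => ¬(e.1 ∈ S1 ∧ e.2 ∈ S1) ∧ ¬(e.1 ∈ S2 ∧ e.2 ∈ S2))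
      = G.blowUpEdges S1 S2 from rfl, ← DiGraph.sum_vertexDim_compl]
  have hF : G.blowUpEdges S1 S2 ⊆ G.E := filter_subset _ _
  have hT : ∀ e ∈ G.E, e.1 ∈ (S1 ∪ S2)ᶜ ∨ e.2 ∈ (S1 ∪ S2)ᶜ → e ∈ G.blowUpEdges S1 S2 :=
    fun e he h => DiGraph.mem_blowUpEdges_of_notMem he (h.imp mem_compl.1 mem_compl.1)
  rw [← DiGraph.sum_sourceShare_add_targetShare hF,
    hG.sum_vertexDim_eq_sum_filter (by omega) hF hT, sum_add_distrib]
  have hsrc := sum_le_sum_of_subset (f := G.sourceShare n)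
    (filter_subset (·.1 ∈ (S1 ∪ S2)ᶜ) (G.blowUpEdges S1 S2))
  have htgt := sum_le_sum_of_subset (f := G.targetShare)
    (filter_subset (·.2 ∈ (S1 ∪ S2)ᶜ) (G.blowUpEdges S1 S2))
  refine ⟨add_le_add hsrc htgt, ?_⟩
  rw [add_eq_add_iff_eq_and_eq hsrc htgt, sum_filter_eq_sum_iff, sum_filter_eq_sum_iff]
  constructor
  · rintro ⟨h1, h2⟩
    refine hG.eq_empty_of_forall_blowUpEdges hdisj hproper (fun e he hS => ?_)
      fun e he hext hS => ?_
    · exact (DiGraph.sourceShare_pos (by omega) e).ne' (h1 e he (notMem_compl.2 hS))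
    · exact (DiGraph.mem_Ee.1 hext).2
        (DiGraph.targetShare_eq_zero_iff.1 (h2 e he (notMem_compl.2 hS)))
  · rintro ⟨rfl, rfl⟩
    simp

/-- For odd `n ≥ 3`, a BCR diagram `Γ`, and disjoint subsets `S1`, `S2` of
the vertices with `S1 ∪ S2 ≠ V(Γ)`, letting `E'` be the set of edges not
having both endpoints in `S1` and not having both endpoints in `S2`, one has
`n·|V_i ∖ (S1 ∪ S2)| + (n+2)·|V_e ∖ (S1 ∪ S2)|
  ≤ (n-1)·|E' ∩ E_i| + (n+1)·|E' ∩ E_e|`,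
with equality if and only if `S1 = ∅` and `S2 = ∅`. -/
theorem bcr_blown_up_dimension_inequality {V : Type*} [DecidableEq V] [Fintype V]
    (G : DiGraph V) (hG : G.IsBCR) (n : ℕ) (hn : 3 ≤ n) (hodd : Odd n)
    (S1 S2 : Finset V) (hdisj : Disjoint S1 S2)
    (hproper : S1 ∪ S2 ≠ Finset.univ) :
    n * (G.Vi \ (S1 ∪ S2)).card + (n + 2) * (G.Ve \ (S1 ∪ S2)).card
      ≤ (n - 1) * ((G.E.filter fun e =>
            ¬(e.1 ∈ S1 ∧ e.2 ∈ S1) ∧ ¬(e.1 ∈ S2 ∧ e.2 ∈ S2)) ∩ G.Ei).card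
        + (n + 1) * ((G.E.filter fun e =>
            ¬(e.1 ∈ S1 ∧ e.2 ∈ S1) ∧ ¬(e.1 ∈ S2 ∧ e.2 ∈ S2)) ∩ G.Ee).card ∧
    (n * (G.Vi \ (S1 ∪ S2)).card + (n + 2) * (G.Ve \ (S1 ∪ S2)).card
      = (n - 1) * ((G.E.filter fun e =>
            ¬(e.1 ∈ S1 ∧ e.2 ∈ S1) ∧ ¬(e.1 ∈ S2 ∧ e.2 ∈ S2)) ∩ G.Ei).card
        + (n + 1) * ((G.E.filter fun e =>
            ¬(e.1 ∈ S1 ∧ e.2 ∈ S1) ∧ ¬(e.1 ∈ S2 ∧ e.2 ∈ S2)) ∩ G.Ee).card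
      ↔ S1 = ∅ ∧ S2 = ∅) :=
  bcr_blown_up_dimension_inequality_general G hG n hn S1 S2 hdisj hproper
end

section
/- There are exactly five isomorphism classes of BCR diagrams of degree 2 (that is, with 4 vertices), where an isomorphism of BCR diagrams is a bijection between the vertex sets that preserves the partition into internal and external vertices and induces a bijection between the edge sets preserving the partition into internal and external edges. -/
open Finset

/-- An isomorphism of diagrams is a bijection between the vertex sets
preserving the partition into internal and external vertices and inducing a
bijection between the edge sets preserving the partition into internal and
external edges. -/
def DiGraph.Isom {V : Type*} {W : Type*} [DecidableEq V] [Fintype V]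
    [DecidableEq W] [Fintype W] (G : DiGraph V) (H : DiGraph W) : Prop :=
  ∃ f : V ≃ W,
    (∀ a b : V, (a, b) ∈ G.E ↔ (f a, f b) ∈ H.E) ∧
    (∀ v : V, v ∈ G.Vi ↔ f v ∈ H.Vi) ∧
    (∀ a b : V, (a, b) ∈ G.Ei ↔ (f a, f b) ∈ H.Ei)

/-!
Every vertex of a BCR diagram has exactly one outgoing edge, so the edges are `v → g v` for a
map `g` without fixed points, and the diagram is determined by `g`, its internal vertices and the
set of vertices whose outgoing edge is internal. Connectivity becomes the absence of nontrivial
`g`-invariant subsets, and the five local conditions become conditions on the fibres of `g`.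
Counting in-degrees, there are as many trivalent as univalent vertices, so on four vertices the
underlying graph is a 4-cycle, a triangle with one leg, or a 2-cycle with two legs. The local
conditions determine the internal edges from the types (internal or external) of the trivalent
vertices, and the two trivalent vertices of a 2-cycle have the same type: this gives one, two and
two classes. Formally, a bijection `W ≃ Fin 4` transports the data to `Fin 4`, where the
classification is checked by evaluation.
-/

namespace Finset

variable {α : Type*}

theorem exists_eq_singleton_and_iff {s : Finset α} {p : α → Prop} :
    (∃ a, s = {a} ∧ p a) ↔ #s = 1 ∧ ∀ a ∈ s, p a := by
  rw [card_eq_one]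
  constructor
  · rintro ⟨a, rfl, ha⟩
    exact ⟨⟨a, rfl⟩, by simpa using ha⟩
  · rintro ⟨⟨a, rfl⟩, ha⟩
    exact ⟨a, rfl, by simpa using ha⟩

variable [DecidableEq α] {s : Finset α}

theorem exists_eq_pair_and_iff {p : α → Prop} :
    (∃ a b, a ≠ b ∧ s = {a, b} ∧ p a ∧ p b) ↔ #s = 2 ∧ ∀ a ∈ s, p a := by
  rw [card_eq_two]
  constructor
  · rintro ⟨a, b, hab, rfl, ha, hb⟩
    exact ⟨⟨a, b, hab, rfl⟩, by simp [ha, hb]⟩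
  · rintro ⟨⟨a, b, hab, rfl⟩, h⟩
    exact ⟨a, b, hab, rfl, h a (by simp), h b (by simp)⟩

theorem exists_eq_pair_and_iff_of_imp_not {p q : α → Prop} (hpq : ∀ a, p a → ¬q a) :
    (∃ a b, a ≠ b ∧ s = {a, b} ∧ p a ∧ q b) ↔ #s = 2 ∧ (∃ a ∈ s, p a) ∧ ∃ b ∈ s, q b := by
  constructor
  · rintro ⟨a, b, hab, rfl, ha, hb⟩
    exact ⟨card_pair hab, ⟨a, by simp, ha⟩, ⟨b, by simp, hb⟩⟩
  · rintro ⟨hs, ⟨a, ha, hpa⟩, ⟨b, hb, hqb⟩⟩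
    have hab : a ≠ b := fun h => hpq a hpa (h ▸ hqb)
    refine ⟨a, b, hab, ?_, hpa, hqb⟩
    refine (eq_of_subset_of_card_le (insert_subset ha (singleton_subset_iff.2 hb)) ?_).symm
    rw [hs, card_pair hab]

end Finset

namespace DiGraph

variable {V W X : Type*} [DecidableEq V] [Fintype V] [DecidableEq W] [Fintype W]
  [DecidableEq X] [Fintype X]

instance (G : DiGraph V) (H : DiGraph W) : Decidable (G.Isom H) := by
  unfold Isom; infer_instance

theorem Isom.trans {G : DiGraph V} {H : DiGraph W} {K : DiGraph X} (hGH : G.Isom H)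
    (hHK : H.Isom K) : G.Isom K := by
  obtain ⟨f, hfE, hfVi, hfEi⟩ := hGH
  obtain ⟨f', hf'E, hf'Vi, hf'Ei⟩ := hHK
  exact ⟨f.trans f', fun a b => (hfE a b).trans (hf'E _ _), fun v => (hfVi v).trans (hf'Vi _),
    fun a b => (hfEi a b).trans (hf'Ei _ _)⟩

theorem mem_of_reflTransGen_adj {G : DiGraph V} {S : Finset V}
    (hS : ∀ e ∈ G.E, e.1 ∈ S ↔ e.2 ∈ S) {v w : V} (hvw : Relation.ReflTransGen G.Adj v w)
    (hv : v ∈ S) : w ∈ S := by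
  induction hvw with
  | refl => exact hv
  | tail _ hab ih => exact hab.elim (fun h => (hS _ h).1 ih) (fun h => (hS _ h).2 ih)

theorem forall_reflTransGen_adj_iff (G : DiGraph V) :
    (∀ v w, Relation.ReflTransGen G.Adj v w) ↔
      ∀ S : Finset V, (∀ e ∈ G.E, e.1 ∈ S ↔ e.2 ∈ S) → S = ∅ ∨ S = univ := by
  classical
  constructor
  · intro hconn S hS
    refine S.eq_empty_or_nonempty.imp_right fun ⟨v, hv⟩ => ?_
    exact eq_univ_iff_forall.2 fun w => mem_of_reflTransGen_adj hS (hconn v w) hv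
  · intro h v w
    let S := univ.filter (Relation.ReflTransGen G.Adj v)
    have hS : ∀ e ∈ G.E, e.1 ∈ S ↔ e.2 ∈ S := fun e he => by
      simp only [S, mem_filter, mem_univ, true_and]
      exact ⟨fun h => h.tail (Or.inl he), fun h => h.tail (Or.inr he)⟩
    have hvS : v ∈ S := by simpa [S] using Relation.ReflTransGen.refl
    rcases h S hS with hempty | huniv
    · simp [hempty] at hvS
    · have hwS : w ∈ S := huniv ▸ mem_univ w
      simpa [S] using hwS

theorem IsBCR.exists_outE_eq_singleton {G : DiGraph V} (hG : G.IsBCR) (v : V) :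
    ∃ e, G.outE v = {e} := by
  rcases hG.2.2.2 v with h | h | h | h | h <;>
  · obtain ⟨e, he, -⟩ := h.2.1
    exact ⟨e, he⟩

/-- The diagram with edges `v → g v`, where the edge out of `v` is internal iff `v ∈ I`. -/
def ofFun (g : V → V) (Vi I : Finset V) : DiGraph V :=
  ⟨univ.image fun v => (v, g v), Vi, I.image fun v => (v, g v)⟩

theorem exists_eq_ofFun {G : DiGraph V} (hEi : G.Ei ⊆ G.E) (hout : ∀ v, ∃ e, G.outE v = {e}) :
    ∃ g I, G = ofFun g G.Vi I := by
  choose e he using hout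
  have hfst : ∀ a, (e a).1 = a := fun a =>
    (mem_filter.1 (he a ▸ mem_singleton_self (e a) : e a ∈ G.outE a)).2
  have hmem : ∀ a b, (a, b) ∈ G.E ↔ b = (e a).2 := fun a b => by
    have hout : (a, b) ∈ G.outE a ↔ (a, b) ∈ G.E := by simp [outE]
    rw [← hout, he, mem_singleton, Prod.ext_iff, hfst]
    exact and_iff_right rfl
  refine ⟨fun a => (e a).2, univ.filter fun a => (a, (e a).2) ∈ G.Ei, ?_⟩
  obtain ⟨E, Vi, Ei⟩ := G
  simp only [ofFun, mk.injEq, true_and]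
  constructor <;> ext ⟨a, b⟩
  · simp [hmem, eq_comm]
  · simp only [mem_image, mem_filter, mem_univ, true_and, Prod.mk.injEq]
    constructor
    · intro h
      obtain rfl := (hmem a b).1 (hEi h)
      exact ⟨a, h, rfl, rfl⟩
    · rintro ⟨a, h, rfl, rfl⟩
      exact h

def fiber (g : V → V) (v : V) : Finset V := univ.filter (g · = v)

@[simp] theorem mem_fiber {g : V → V} {w v : V} : w ∈ fiber g v ↔ g w = v := by simp [fiber]

theorem fiber_conj {g : V → V} (e : V ≃ W) (v : V) :
    fiber (e.conj g) (e v) = (fiber g v).map e.toEmbedding := by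
  ext w
  simp [Equiv.conj_apply]

section ofFun

variable {g : V → V} {Vi I : Finset V}

@[simp] theorem mem_ofFun_E {a b : V} : (a, b) ∈ (ofFun g Vi I).E ↔ g a = b := by simp [ofFun]

@[simp] theorem mem_ofFun_Ei {a b : V} : (a, b) ∈ (ofFun g Vi I).Ei ↔ a ∈ I ∧ g a = b := by
  simp [ofFun, and_comm]

@[simp] theorem mem_ofFun_Ee {a b : V} : (a, b) ∈ (ofFun g Vi I).Ee ↔ a ∉ I ∧ g a = b := by
  simp only [Ee, mem_sdiff, mem_ofFun_E, mem_ofFun_Ei]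
  tauto

@[simp] theorem ofFun_Vi : (ofFun g Vi I).Vi = Vi := rfl

theorem outE_ofFun (v : V) : (ofFun g Vi I).outE v = {(v, g v)} := by
  ext ⟨a, b⟩
  simp only [outE, mem_filter, mem_ofFun_E, mem_singleton, Prod.mk.injEq]
  constructor
  · rintro ⟨rfl, rfl⟩; exact ⟨rfl, rfl⟩
  · rintro ⟨rfl, rfl⟩; exact ⟨rfl, rfl⟩

theorem inE_ofFun (v : V) : (ofFun g Vi I).inE v = (fiber g v).image (·, v) := by
  ext ⟨a, b⟩
  simp only [inE, mem_filter, mem_ofFun_E, mem_image, mem_fiber, Prod.mk.injEq]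
  constructor
  · rintro ⟨rfl, rfl⟩; exact ⟨a, rfl, rfl, rfl⟩
  · rintro ⟨a, rfl, rfl, rfl⟩; exact ⟨rfl, rfl⟩

theorem card_inE_ofFun (v : V) : #((ofFun g Vi I).inE v) = #(fiber g v) := by
  rw [inE_ofFun, card_image_of_injective _ (Prod.mk_left_injective v)]

theorem univalent_ofFun_iff {v : V} : (ofFun g Vi I).Univalent v ↔ fiber g v = ∅ := by
  simp [Univalent, valence, outE_ofFun, card_inE_ofFun]

theorem cond1_ofFun_iff {v : V} : (ofFun g Vi I).Cond1 v ↔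
    v ∉ Vi ∧ v ∉ I ∧ #(fiber g v) = 2 ∧ (∀ w ∈ fiber g v, w ∉ I) ∧
      ∃ w ∈ fiber g v, fiber g w = ∅ := by
  simp only [Cond1, exists_eq_pair_and_iff, card_inE_ofFun]
  simp +contextual [outE_ofFun, inE_ofFun, univalent_ofFun_iff, and_assoc]

theorem cond2_ofFun_iff {v : V} : (ofFun g Vi I).Cond2 v ↔
    v ∈ Vi ∧ v ∈ I ∧ #(fiber g v) = 2 ∧ (∃ w ∈ fiber g v, w ∈ I) ∧
      ∃ w ∈ fiber g v, w ∉ I ∧ fiber g w = ∅ := by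
  have hEi_Ee : ∀ e, e ∈ (ofFun g Vi I).Ei →
      ¬(e ∈ (ofFun g Vi I).Ee ∧ (ofFun g Vi I).Univalent e.1) :=
    fun e he h => (mem_sdiff.1 h.1).2 he
  simp only [Cond2, exists_eq_pair_and_iff_of_imp_not hEi_Ee, card_inE_ofFun]
  simp +contextual only [ofFun_Vi, outE_ofFun, singleton_inj, exists_eq_left', mem_ofFun_Ei,
    and_true, inE_ofFun, mem_image, mem_fiber, exists_exists_and_eq_and, univalent_ofFun_iff,
    mem_ofFun_Ee, and_congr_right_iff]
  grind

theorem cond3_ofFun_iff {v : V} : (ofFun g Vi I).Cond3 v ↔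
    v ∈ Vi ∧ v ∉ I ∧ fiber g v = ∅ := by
  simp [Cond3, outE_ofFun, inE_ofFun]

theorem cond4_ofFun_iff {v : V} : (ofFun g Vi I).Cond4 v ↔
    v ∈ Vi ∧ v ∈ I ∧ #(fiber g v) = 1 ∧ ∀ w ∈ fiber g v, w ∉ I := by
  simp only [Cond4, exists_eq_singleton_and_iff, card_inE_ofFun]
  simp +contextual [outE_ofFun, inE_ofFun]

theorem cond5_ofFun_iff {v : V} : (ofFun g Vi I).Cond5 v ↔
    v ∈ Vi ∧ v ∉ I ∧ #(fiber g v) = 1 ∧ ∀ w ∈ fiber g v, w ∈ I := by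
  simp only [Cond5, exists_eq_singleton_and_iff, card_inE_ofFun]
  simp +contextual [outE_ofFun, inE_ofFun]

-- Deciding the conditions through the fibres of `g` avoids enumerating pairs of edges.
instance (v : V) : Decidable ((ofFun g Vi I).Cond1 v) := decidable_of_iff _ cond1_ofFun_iff.symm
instance (v : V) : Decidable ((ofFun g Vi I).Cond2 v) := decidable_of_iff _ cond2_ofFun_iff.symm
instance (v : V) : Decidable ((ofFun g Vi I).Cond3 v) := decidable_of_iff _ cond3_ofFun_iff.symm
instance (v : V) : Decidable ((ofFun g Vi I).Cond4 v) := decidable_of_iff _ cond4_ofFun_iff.symm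
instance (v : V) : Decidable ((ofFun g Vi I).Cond5 v) := decidable_of_iff _ cond5_ofFun_iff.symm

theorem isBCR_ofFun_iff : (ofFun g Vi I).IsBCR ↔
    (∀ v, g v ≠ v) ∧ (∀ S : Finset V, (∀ v, v ∈ S ↔ g v ∈ S) → S = ∅ ∨ S = univ) ∧
      ∀ v, (ofFun g Vi I).Cond1 v ∨ (ofFun g Vi I).Cond2 v ∨ (ofFun g Vi I).Cond3 v ∨
        (ofFun g Vi I).Cond4 v ∨ (ofFun g Vi I).Cond5 v := by
  have hEi : (ofFun g Vi I).Ei ⊆ (ofFun g Vi I).E := image_subset_image (subset_univ I)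
  simp only [IsBCR, forall_reflTransGen_adj_iff, hEi, true_and, Prod.forall, mem_ofFun_E]
  simp [eq_comm]

theorem isom_ofFun_conj (e : V ≃ W) :
    (ofFun g Vi I).Isom (ofFun (e.conj g) (Vi.map e.toEmbedding) (I.map e.toEmbedding)) :=
  ⟨e, by simp [Equiv.conj_apply], by simp, by simp [Equiv.conj_apply]⟩

theorem IsBCR.ofFun_conj (e : V ≃ W) (h : (ofFun g Vi I).IsBCR) :
    (ofFun (e.conj g) (Vi.map e.toEmbedding) (I.map e.toEmbedding)).IsBCR := by
  obtain ⟨hfix, hconn, hcond⟩ := isBCR_ofFun_iff.1 h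
  refine isBCR_ofFun_iff.2 ⟨fun w => ?_, fun S hS => ?_, fun w => ?_⟩
  · simpa [Equiv.conj_apply, ← e.eq_symm_apply] using hfix (e.symm w)
  · refine (hconn (S.map e.symm.toEmbedding) fun v => ?_).imp map_eq_empty.1 fun h => ?_
    · simpa [Equiv.conj_apply] using hS (e v)
    · exact map_injective _ (h.trans (map_univ_equiv _).symm)
  · obtain ⟨v, rfl⟩ := e.surjective w
    simpa [cond1_ofFun_iff, cond2_ofFun_iff, cond3_ofFun_iff, cond4_ofFun_iff, cond5_ofFun_iff,
      fiber_conj, -mem_fiber, -mem_map_equiv] using hcond v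

end ofFun

end DiGraph

open DiGraph

def bcrDegreeTwo : Fin 5 → DiGraph (Fin 4) :=
  ![ofFun ![1, 0, 0, 1] {2, 3} ∅, ofFun ![1, 0, 0, 1] univ {0, 1},
    ofFun ![1, 2, 0, 0] {1, 2, 3} {1}, ofFun ![1, 2, 0, 0] univ {0, 2},
    ofFun ![1, 2, 3, 0] univ {0, 2}]

theorem isBCR_bcrDegreeTwo (i : Fin 5) : (bcrDegreeTwo i).IsBCR := by
  fin_cases i <;> exact isBCR_ofFun_iff.2 (by decide)

theorem eq_of_isom_bcrDegreeTwo :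
    ∀ i j : Fin 5, (bcrDegreeTwo i).Isom (bcrDegreeTwo j) → i = j := by
  decide

-- The conditions on `g` precede `∀ Vi I`, so that evaluation discards a map `g` before
-- enumerating the 256 choices of `Vi` and `I`.
theorem exists_isom_bcrDegreeTwo : ∀ g : Fin 4 → Fin 4, (∀ v, g v ≠ v) →
    (∀ S : Finset (Fin 4), (∀ v, v ∈ S ↔ g v ∈ S) → S = ∅ ∨ S = univ) →
    ∀ Vi I : Finset (Fin 4), (∀ v, (ofFun g Vi I).Cond1 v ∨ (ofFun g Vi I).Cond2 v ∨
      (ofFun g Vi I).Cond3 v ∨ (ofFun g Vi I).Cond4 v ∨ (ofFun g Vi I).Cond5 v) →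
    ∃ i, (ofFun g Vi I).Isom (bcrDegreeTwo i) := by
  decide +kernel

universe u

/-- There are exactly five isomorphism classes of BCR diagrams of degree 2
(that is, with 4 vertices). -/
theorem bcr_degree_two_classification :
    ∃ Gs : Fin 5 → DiGraph (Fin 4),
      (∀ i, (Gs i).IsBCR) ∧
      (∀ i j : Fin 5, DiGraph.Isom (Gs i) (Gs j) → i = j) ∧
      (∀ (W : Type u) [DecidableEq W] [Fintype W] (G : DiGraph W),
        G.IsBCR → Fintype.card W = 4 → ∃ i, DiGraph.Isom G (Gs i)) := by
  refine ⟨bcrDegreeTwo, isBCR_bcrDegreeTwo, eq_of_isom_bcrDegreeTwo, fun W _ _ G hG hcard => ?_⟩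
  obtain ⟨g, I, hGg⟩ := exists_eq_ofFun hG.2.1 hG.exists_outE_eq_singleton
  rw [hGg] at hG ⊢
  let e := Fintype.equivFinOfCardEq hcard
  obtain ⟨hfix, hconn, hcond⟩ := isBCR_ofFun_iff.1 (hG.ofFun_conj e)
  obtain ⟨i, hi⟩ := exists_isom_bcrDegreeTwo _ hfix hconn _ _ hcond
  exact ⟨i, (isom_ofFun_conj e).trans hi⟩
end
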